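/- arXiv:2309.04813 — 7 statements merged into one kernel-verified Lean document; each statement's English description precedes it below -/
import Mathlib

section
/- Let s be a positive integer and, for every function τ : {1,…,s} → {1,−1} with τ(1)=1, let m_τ be a positive integer. Let Z ⊆ ℝ^s be a finite set of points such that all |Z|·s coordinates of points of Z are pairwise distinct. Call a sequence z_1,…,z_m of points of Z τ-monotone if for each i with τ(i)=1 the i-th coordinates are strictly increasing, and for each i with τ(i)=−1 they are strictly decreasing. If for each such τ every τ-monotone sequence of points in Z has length at most m_τ, then |Z| ≤ ∏_τ m_τ, where the product runs over all functions τ : {1,…,s} → {1,−1} with τ(1)=1. -/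
/-!
Label each point `z ∈ Z` by the vector whose `τ`-entry is the length of the longest `τ`-monotone
sequence in `Z` ending at `z`; this entry lies in `[1, m_τ]`. Two distinct points `z, w` differ in
every coordinate, so one of them precedes the other in the orthant order given by the sign pattern
of `w - z` or of `z - w` (whichever is positive in the first coordinate), and appending it to a
longest sequence ending at the other one shows that their labels differ at that `τ`. Hence the
labelling is injective and `|Z| ≤ ∏ m_τ`.
-/

open Finset

theorem RelSeries.exists_rank_of_length_lt {α : Type*} {r : SetRel α α} {n : ℕ}
    (hr : ∀ p : RelSeries r, p.length < n) :
    ∃ f : α → ℕ, (∀ a, f a < n) ∧ ∀ a b, (a, b) ∈ r → f a < f b := by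
  classical
  let EndsAt (a : α) (t : ℕ) : Prop := ∃ p : RelSeries r, p.length = t ∧ p.last = a
  have hends (a : α) : EndsAt a (Nat.findGreatest (EndsAt a) n) :=
    Nat.findGreatest_spec (Nat.zero_le n) ⟨RelSeries.singleton r a, rfl, rfl⟩
  refine ⟨fun a => Nat.findGreatest (EndsAt a) n, fun a => ?_, fun a b hab => ?_⟩
  · obtain ⟨p, hp, -⟩ := hends a
    simpa only [← hp] using hr p
  · obtain ⟨p, hp, rfl⟩ := hends a
    have hsnoc : EndsAt b (p.length + 1) := ⟨p.snoc b hab, rfl, p.last_snoc b hab⟩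
    have := Nat.le_findGreatest (hr _) hsnoc
    dsimp only
    omega

theorem card_le_prod_of_injective_labels {α ι : Type*} [Fintype α] (S : Finset ι) (m : ι → ℕ)
    (f : ι → α → ℕ) (hf : ∀ τ ∈ S, ∀ a, f τ a < m τ)
    (hinj : ∀ a b, (∀ τ ∈ S, f τ a = f τ b) → a = b) :
    Fintype.card α ≤ ∏ τ ∈ S, m τ := by
  classical
  let label (a : α) (τ : S) : Fin (m τ) := ⟨f τ a, hf τ τ.2 a⟩
  have hlabel : Function.Injective label := fun a b hab =>
    hinj a b fun τ hτ => congrArg Fin.val (congrFun hab ⟨τ, hτ⟩)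
  calc Fintype.card α ≤ Fintype.card (∀ τ : S, Fin (m τ)) := Fintype.card_le_of_injective _ hlabel
    _ = ∏ τ ∈ S, m τ := by rw [Fintype.card_pi, ← Finset.prod_coe_sort S m]; simp

section SignOrder

variable {s : ℕ}

def SignLT (τ : Fin s → Bool) (x y : Fin s → ℝ) : Prop :=
  ∀ i, if τ i = true then x i < y i else y i < x i

theorem signLT_decide_lt {x y : Fin s → ℝ} (h : ∀ i, x i ≠ y i) :
    SignLT (fun i => decide (x i < y i)) x y := by
  intro i
  by_cases hi : x i < y i
  · simp [hi]
  · simpa [hi] using (not_lt.1 hi).lt_of_ne (h i).symm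

theorem exists_signLT_of_forall_ne (i₀ : Fin s) {x y : Fin s → ℝ} (h : ∀ i, x i ≠ y i) :
    ∃ τ : Fin s → Bool, τ i₀ = true ∧ (SignLT τ x y ∨ SignLT τ y x) := by
  rcases (h i₀).lt_or_gt with hlt | hgt
  · exact ⟨_, decide_eq_true hlt, .inl (signLT_decide_lt h)⟩
  · exact ⟨_, decide_eq_true hgt, .inr (signLT_decide_lt fun i => (h i).symm)⟩

theorem RelSeries.coord_strictMono_or_strictAnti {Z : Set (Fin s → ℝ)} {τ : Fin s → Bool}
    (p : RelSeries {q : Z × Z | SignLT τ q.1 q.2}) (i : Fin s) :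
    if τ i = true then StrictMono (fun k => (p k : Fin s → ℝ) i)
    else StrictAnti (fun k => (p k : Fin s → ℝ) i) := by
  split_ifs with hτ
  · exact Fin.strictMono_iff_lt_succ.2 fun k => by simpa [hτ] using p.step k i
  · exact Fin.strictAnti_iff_succ_lt.2 fun k => by simpa [hτ] using p.step k i

end SignOrder

theorem multidim_erdos_szekeres_upper_general (s : ℕ) (hs : 0 < s)
    (m : (Fin s → Bool) → ℕ)
    (Z : Finset (Fin s → ℝ))
    (hdist : ∀ z ∈ Z, ∀ w ∈ Z, ∀ i j : Fin s, z i = w j → z = w ∧ i = j)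
    (hmono : ∀ τ : Fin s → Bool, τ ⟨0, hs⟩ = true →
      ∀ t : ℕ, ∀ g : Fin t → (Fin s → ℝ), (∀ k, g k ∈ Z) →
        (∀ i : Fin s, if τ i = true then StrictMono (fun k => g k i)
          else StrictAnti (fun k => g k i)) →
        t ≤ m τ) :
    Z.card ≤ ∏ τ ∈ Finset.univ.filter (fun τ : Fin s → Bool => τ ⟨0, hs⟩ = true), m τ := by
  set S := Finset.univ.filter (fun τ : Fin s → Bool => τ ⟨0, hs⟩ = true)
  -- a series of length `L` has `L + 1` points, so `hmono` bounds `L + 1` by `m τ`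
  have hlen (τ) (hτ : τ ∈ S) (p : RelSeries {q : Z × Z | SignLT τ q.1 q.2}) : p.length < m τ :=
    hmono τ (mem_filter.1 hτ).2 _ (fun k => p k) (fun k => (p k).2) p.coord_strictMono_or_strictAnti
  choose! rank hrank_lt hrank_mono using fun τ hτ => RelSeries.exists_rank_of_length_lt (hlen τ hτ)
  rw [← Fintype.card_coe]
  refine card_le_prod_of_injective_labels S m rank hrank_lt fun a b hab => ?_
  by_contra hne
  have hcoord (i : Fin s) : (a : Fin s → ℝ) i ≠ (b : Fin s → ℝ) i := fun h =>
    hne (Subtype.ext (hdist a a.2 b b.2 i i h).1)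
  obtain ⟨τ, hτ, hab' | hba'⟩ := exists_signLT_of_forall_ne ⟨0, hs⟩ hcoord
  all_goals have hτS : τ ∈ S := mem_filter.2 ⟨mem_univ τ, hτ⟩
  · exact (hrank_mono τ hτS a b hab').ne (hab τ hτS)
  · exact (hrank_mono τ hτS b a hba').ne' (hab τ hτS)

/-- **Multi-dimensional Erdős–Szekeres theorem, upper bound.** Here `τ : Fin s → Bool` encodes a
sign function (`true` = `+1`, `false` = `-1`), and a sequence of points is `τ`-monotone if its
`i`-th coordinates strictly increase when `τ i = true` and strictly decrease when `τ i = false`. -/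
theorem multidim_erdos_szekeres_upper (s : ℕ) (hs : 0 < s)
    (m : (Fin s → Bool) → ℕ) (hm : ∀ τ, 0 < m τ)
    (Z : Finset (Fin s → ℝ))
    (hdist : ∀ z ∈ Z, ∀ w ∈ Z, ∀ i j : Fin s, z i = w j → z = w ∧ i = j)
    (hmono : ∀ τ : Fin s → Bool, τ ⟨0, hs⟩ = true →
      ∀ t : ℕ, ∀ g : Fin t → (Fin s → ℝ), (∀ k, g k ∈ Z) →
        (∀ i : Fin s, if τ i = true then StrictMono (fun k => g k i)
          else StrictAnti (fun k => g k i)) →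
        t ≤ m τ) :
    Z.card ≤ ∏ τ ∈ Finset.univ.filter (fun τ : Fin s → Bool => τ ⟨0, hs⟩ = true), m τ :=
  multidim_erdos_szekeres_upper_general s hs m Z hdist hmono
end

section
/- Let s be a positive integer and, for every function τ : {1,…,s} → {1,−1} with τ(1)=1, let m_τ be a positive integer. Then there exists a set Z ⊆ ℝ^s of size |Z| = ∏_τ m_τ whose |Z|·s coordinates are pairwise distinct, such that for every τ : {1,…,s} → {1,−1} with τ(1)=1, every τ-monotone sequence of points in Z has length at most m_τ. -/
/-!
Index the points by digit vectors `a`, one digit `a τ < m τ` for each sign pattern `τ` with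
`τ 0 = +1`, the patterns listed in a fixed order. Coordinate `i` of the point of `a` is (an order
embedding into `ℝ` of) the signed digit vector `(τ i • a τ)_τ` in the lexicographic order. For
two distinct points the first digit `τ₀` on which they differ decides every coordinate
comparison, in the direction `τ₀ i • sign (b τ₀ - a τ₀)`. So if `b` lies `τ`-above `a`, then
`τ₀ = τ`, and coordinate `0` forces `a τ < b τ`: along a `τ`-monotone sequence the `τ`-digit
strictly increases, hence the sequence has at most `m τ` terms.
-/

open Function Finset

instance Lex.countable {α : Type*} [Countable α] : Countable (Lex α) := ‹Countable α›

theorem Pi.exists_ne_and_forall_lt_eq {ι : Type*} {β : ι → Type*} [LinearOrder ι]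
    [WellFoundedLT ι] {a b : ∀ k, β k} (h : a ≠ b) : ∃ k, a k ≠ b k ∧ ∀ j < k, a j = b j := by
  obtain ⟨k, hk, hmin⟩ := wellFounded_lt.has_min {k | a k ≠ b k} (Function.ne_iff.1 h)
  exact ⟨k, hk, fun j hj => not_not.1 fun hne => hmin j hne hj⟩

namespace ErdosSzekeres

section SignedDigits

variable {ι : Type*} {n : ι → ℕ}

def signedDigits (σ : ι → Bool) (a : ∀ k, Fin (n k)) : Lex (ι → ℤ) :=
  toLex fun k => if σ k then (a k : ℤ) else -(a k : ℤ)

theorem signedDigits_apply_eq_iff (σ : ι → Bool) {a b : ∀ k, Fin (n k)} (k : ι) :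
    signedDigits σ a k = signedDigits σ b k ↔ a k = b k := by
  simp only [signedDigits, Pi.toLex_apply, Fin.ext_iff]
  split <;> omega

theorem signedDigits_injective (σ : ι → Bool) : Injective (signedDigits (n := n) σ) :=
  fun _ _ h => funext fun k => (signedDigits_apply_eq_iff σ k).1 (congrFun h k)

theorem signedDigits_lt_signedDigits_iff [LinearOrder ι] (σ : ι → Bool)
    {a b : ∀ k, Fin (n k)} {k : ι} (hk : a k ≠ b k) (hlt : ∀ j < k, a j = b j) :
    signedDigits σ a < signedDigits σ b ↔ (σ k = true ↔ a k < b k) := by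
  have hdigit : signedDigits σ a k < signedDigits σ b k ↔ (σ k = true ↔ a k < b k) := by
    simp only [signedDigits, Pi.toLex_apply, Fin.lt_def]
    split <;> simp_all; omega
  have hagree : ∀ j < k, signedDigits σ a j = signedDigits σ b j :=
    fun j hj => (signedDigits_apply_eq_iff σ j).2 (hlt j hj)
  refine ⟨fun hab => by_contra fun hn => ?_, fun h => ⟨k, hagree, hdigit.2 h⟩⟩
  have hba : signedDigits σ b k < signedDigits σ a k :=
    lt_of_le_of_ne (not_lt.1 (mt hdigit.1 hn)) (mt (signedDigits_apply_eq_iff σ k).1 hk.symm)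
  exact lt_asymm hab ⟨k, fun j hj => (hagree j hj).symm, hba⟩

end SignedDigits

section Construction

variable {ι κ : Type*} [LinearOrder ι] [Finite ι] [LinearOrder κ] [Countable κ] {n : ι → ℕ}

noncomputable def lexToReal : κ ×ₗ Lex (ι → ℤ) ↪o ℝ :=
  (Order.embedding_from_countable_to_dense _ _).some

/-- `σ k` is the sign pattern of digit `k`. The coordinate `i` comes first in the key, which makes
all coordinates of all points pairwise distinct. -/
noncomputable def point (σ : ι → κ → Bool) (a : ∀ k, Fin (n k)) (i : κ) : ℝ :=
  lexToReal (toLex (i, signedDigits (σ · i) a))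

theorem point_eq_point_iff {σ : ι → κ → Bool} {a b : ∀ k, Fin (n k)} {i j : κ} :
    point σ a i = point σ b j ↔ a = b ∧ i = j := by
  simp only [point, lexToReal.injective.eq_iff, toLex_inj, Prod.mk.injEq]
  constructor
  · rintro ⟨rfl, h⟩
    exact ⟨signedDigits_injective _ h, rfl⟩
  · rintro ⟨rfl, rfl⟩
    exact ⟨rfl, rfl⟩

theorem point_lt_point_iff (σ : ι → κ → Bool) {a b : ∀ k, Fin (n k)} {k : ι} (i : κ)
    (hk : a k ≠ b k) (hlt : ∀ j < k, a j = b j) :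
    point σ a i < point σ b i ↔ (σ k i = true ↔ a k < b k) := by
  simp only [point, OrderEmbedding.lt_iff_lt, Prod.Lex.toLex_lt_toLex, lt_irrefl, false_or,
    true_and]
  exact signedDigits_lt_signedDigits_iff _ hk hlt

theorem lt_of_point_signed_lt {σ : ι → κ → Bool} (hσ : Injective σ) {i₀ : κ}
    (hi₀ : ∀ k, σ k i₀ = true) {τ : κ → Bool} {k : ι} (hk : σ k = τ) {a b : ∀ k, Fin (n k)}
    (hab : ∀ i, if τ i then point σ a i < point σ b i else point σ b i < point σ a i) :
    a k < b k := by
  have hne : a ≠ b := by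
    rintro rfl
    simpa [← hk, hi₀] using hab i₀
  obtain ⟨k₀, hk₀, hlt⟩ := Pi.exists_ne_and_forall_lt_eq hne
  have hab_iff i := point_lt_point_iff σ i hk₀ hlt
  have hba_iff i := point_lt_point_iff σ i (Ne.symm hk₀) fun j hj => (hlt j hj).symm
  have hinc : a k₀ < b k₀ := by
    simpa [← hk, hi₀, hab_iff] using hab i₀
  have hτ : σ k₀ = τ := by
    funext i
    cases hτi : τ i
    · simpa [hτi, hba_iff, not_lt_of_gt hinc] using hab i
    · simpa [hτi, hab_iff, hinc] using hab i
  rwa [← hσ (hτ.trans hk.symm)]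

theorem length_le_of_signMonotone {σ : ι → κ → Bool} (hσ : Injective σ) {i₀ : κ}
    (hi₀ : ∀ k, σ k i₀ = true) {τ : κ → Bool} {k : ι} (hk : σ k = τ) {t : ℕ}
    (g : Fin t → ∀ k, Fin (n k))
    (hg : ∀ i, if τ i then StrictMono (fun l => point σ (g l) i)
      else StrictAnti (fun l => point σ (g l) i)) :
    t ≤ n k := by
  refine Fin.le_of_injective (fun l => g l k) (StrictMono.injective fun l l' hll' => ?_)
  refine lt_of_point_signed_lt hσ hi₀ hk fun i => ?_
  have hgi := hg i
  split_ifs at hgi ⊢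
  exacts [hgi hll', hgi hll']

end Construction

end ErdosSzekeres

/-- `τ : Fin s → Bool` encodes a sign function (`true` = `+1`, `false` = `-1`). -/
theorem multidim_erdos_szekeres_construction_general (s : ℕ) (hs : 0 < s)
    (m : (Fin s → Bool) → ℕ) :
    ∃ Z : Finset (Fin s → ℝ),
      Z.card = (∏ τ ∈ Finset.univ.filter (fun τ : Fin s → Bool => τ ⟨0, hs⟩ = true), m τ) ∧
      (∀ z ∈ Z, ∀ w ∈ Z, ∀ i j : Fin s, z i = w j → z = w ∧ i = j) ∧
      (∀ τ : Fin s → Bool, τ ⟨0, hs⟩ = true →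
        ∀ t : ℕ, ∀ g : Fin t → (Fin s → ℝ), (∀ k, g k ∈ Z) →
          (∀ i : Fin s, if τ i = true then StrictMono (fun k => g k i)
            else StrictAnti (fun k => g k i)) →
          t ≤ m τ) := by
  let T := {τ : Fin s → Bool // τ ⟨0, hs⟩ = true}
  let e : Fin (Fintype.card T) ≃ T := (Fintype.equivFin T).symm
  let σ : Fin (Fintype.card T) → Fin s → Bool := fun k => e k
  have hσ : Injective σ := Subtype.val_injective.comp e.injective
  have hi₀ : ∀ k, σ k ⟨0, hs⟩ = true := fun k => (e k).2
  let P := ErdosSzekeres.point (n := fun k => m (e k)) σ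
  have hP : Injective P := fun a b h =>
    (ErdosSzekeres.point_eq_point_iff.1 (congrFun h ⟨0, hs⟩)).1
  refine ⟨univ.image P, ?_, ?_, ?_⟩
  · rw [card_image_of_injective _ hP, card_univ, Fintype.card_pi,
      prod_subtype (p := fun τ => τ ⟨0, hs⟩ = true) _ (fun τ => by simp) m]
    exact Fintype.prod_equiv e _ _ fun k => Fintype.card_fin _
  · simp only [mem_image, mem_univ, true_and]
    rintro _ ⟨a, rfl⟩ _ ⟨b, rfl⟩ i j hij
    obtain ⟨rfl, rfl⟩ := ErdosSzekeres.point_eq_point_iff.1 hij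
    exact ⟨rfl, rfl⟩
  · intro τ hτ t g hgZ hg
    choose a ha using fun l => mem_image.1 (hgZ l)
    obtain rfl : (fun l => P (a l)) = g := funext fun l => (ha l).2
    simpa [σ] using ErdosSzekeres.length_le_of_signMonotone hσ hi₀
      (k := e.symm ⟨τ, hτ⟩) (by simp [σ]) a hg

/-- **Multi-dimensional Erdős–Szekeres theorem, tightness.** Here `τ : Fin s → Bool` encodes a
sign function (`true` = `+1`, `false` = `-1`), and a sequence of points is `τ`-monotone if its
`i`-th coordinates strictly increase when `τ i = true` and strictly decrease when `τ i = false`. -/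
theorem multidim_erdos_szekeres_construction (s : ℕ) (hs : 0 < s)
    (m : (Fin s → Bool) → ℕ) (hm : ∀ τ, 0 < m τ) :
    ∃ Z : Finset (Fin s → ℝ),
      Z.card = (∏ τ ∈ Finset.univ.filter (fun τ : Fin s → Bool => τ ⟨0, hs⟩ = true), m τ) ∧
      (∀ z ∈ Z, ∀ w ∈ Z, ∀ i j : Fin s, z i = w j → z = w ∧ i = j) ∧
      (∀ τ : Fin s → Bool, τ ⟨0, hs⟩ = true →
        ∀ t : ℕ, ∀ g : Fin t → (Fin s → ℝ), (∀ k, g k ∈ Z) →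
          (∀ i : Fin s, if τ i = true then StrictMono (fun k => g k i)
            else StrictAnti (fun k => g k i)) →
          t ≤ m τ) :=
  multidim_erdos_szekeres_construction_general s hs m
end

section
/- Let r ≥ 1. For every collectable r-pattern P let m_P be a positive integer. Then there exists a collection H of pairwise disjoint r-element subsets of ℤ such that for every collectable r-pattern P every P-clique in H has size at most m_P, and |H| = max over all chains λ^{(1)} ≻ λ^{(2)} ≻ … ≻ λ^{(r)} of ordered partitions of r of the product ∏_{P ∈ 𝒫(λ^{(1)}) ∪ … ∪ 𝒫(λ^{(r)})} m_P. -/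
/-- A block `A^k B^k` (if `b = true`) or `B^k A^k` (if `b = false`), where `true` encodes
the letter A and `false` encodes the letter B. -/
def pblock (k : ℕ) (b : Bool) : List Bool :=
  if b then List.replicate k true ++ List.replicate k false
  else List.replicate k false ++ List.replicate k true

/-- An `r`-pattern: a string in `{A,B}^{2r}` starting with A, with `r` A's and `r` B's.
Here `true` encodes A and `false` encodes B. -/
def IsPattern (r : ℕ) (P : List Bool) : Prop :=
  P.length = 2 * r ∧ P.count true = r ∧ P.head? = some true

/-- The pattern determined by the pair of disjoint finite sets `(e, f)`: list the elements of
`e ∪ f` in increasing order and record membership in `e` (A = `true`) vs `f` (B = `false`). -/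
def patternOfPair (e f : Finset ℤ) : List Bool :=
  ((e ∪ f).sort (· ≤ ·)).map (fun x => decide (x ∈ e))

/-- The unordered pair `{e, f}` realizes the pattern `P`. -/
def Realizes (P : List Bool) (e f : Finset ℤ) : Prop :=
  patternOfPair e f = P ∨ patternOfPair f e = P

/-- A collection `S` is a `P`-clique if every pair of distinct members realizes the pattern `P`. -/
def IsPClique (P : List Bool) (S : Finset (Finset ℤ)) : Prop :=
  ∀ e ∈ S, ∀ f ∈ S, e ≠ f → Realizes P e f

/-- The collectable pattern with block sizes `2·lam 0, 2·lam 1, …` and block orientations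
given by `τ` (`true` = `A^k B^k`, `false` = `B^k A^k`). -/
def patternOfParts (lam : List ℕ) (τ : Fin lam.length → Bool) : List Bool :=
  (List.ofFn (fun i => pblock (lam.get i) (τ i))).flatten

/-- `𝒫(lam)`: the set of collectable patterns whose block partition has block sizes
`2·lam 0, 2·lam 1, …` in order (the first block must start with A). -/
def patternFinset (lam : List ℕ) : Finset (List Bool) :=
  (Finset.univ.filter (fun τ : Fin lam.length → Bool =>
      ∀ h : 0 < lam.length, τ ⟨0, h⟩ = true)).image (patternOfParts lam)

/-- An ordered partition of `r`: a list of positive integers summing to `r`. -/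
def IsOrderedPartition (r : ℕ) (lam : List ℕ) : Prop :=
  lam.sum = r ∧ ∀ k ∈ lam, 0 < k

/-- A pattern is collectable if it admits a block partition. -/
def Collectable (r : ℕ) (P : List Bool) : Prop :=
  ∃ lam : List ℕ, IsOrderedPartition r lam ∧ P ∈ patternFinset lam

/-- `Refines lam lam'` (i.e. `lam ≻ lam'`): `lam'` is obtained from `lam` by splitting
summands into consecutive sub-summands. -/
def Refines (lam lam' : List ℕ) : Prop :=
  ∃ ss : List (List ℕ), ss.flatten = lam' ∧ ss.map List.sum = lam ∧ ∀ g ∈ ss, g ≠ []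

/-- A chain `λ⁽¹⁾ ≻ λ⁽²⁾ ≻ … ≻ λ⁽ʳ⁾` of ordered partitions of `r`, where `λ⁽ˢ⁾` has `s` parts. -/
def IsPartitionChain (r : ℕ) (c : List (List ℕ)) : Prop :=
  c.length = r ∧ (∀ lam ∈ c, IsOrderedPartition r lam) ∧
    (∀ i, ∀ h : i < c.length, (c.get ⟨i, h⟩).length = i + 1) ∧
    List.Chain' Refines c

/-- The union `𝒫(λ⁽¹⁾) ∪ … ∪ 𝒫(λ⁽ʳ⁾)` of pattern sets along a chain. -/
def chainPatterns (c : List (List ℕ)) : Finset (List Bool) :=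
  c.foldr (fun lam acc => patternFinset lam ∪ acc) ∅

/-!
Take a chain `c` maximizing the product and let `U` be its pattern set. The edges are indexed by
the labellings `t` with `t P < m P` for `P ∈ U`, so there are `∏_{P ∈ U} m P` of them.
Every pattern of `U`, read with the blocks of a partition `λ ∈ c`, is one lexicographic
coordinate, coarse partitions first: in it, position `i` of edge `t` gets the pair
(block of `i` in `λ`, `± t P`), the sign being the orientation of that block. For two labellings
the first coordinate `P` on which they differ decides the interleaving of the two edges: earlier
coordinates come from coarser partitions, so they only order positions lying in different blocks
of `λ`, and inside a block of `λ` the sign puts one edge first exactly as `P` prescribes. So each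
pair of edges realizes a single pattern `P ∈ U`, on which their labels differ, and a `P`-clique
has at most `m P` members.
-/

open Finset

def blockIdx : List ℕ → ℕ → ℕ
  | [], _ => 0
  | k :: ks, i => if i < k then 0 else blockIdx ks (i - k) + 1

theorem blockIdx_mono : ∀ lam : List ℕ, Monotone (blockIdx lam)
  | [] => fun _ _ _ => le_rfl
  | k :: ks => fun i i' h => by
    simp only [blockIdx]
    split_ifs <;> first | omega | exact Nat.succ_le_succ (blockIdx_mono ks (by omega))

theorem blockIdx_append_of_lt : ∀ (lam lam' : List ℕ) {i : ℕ}, i < lam.sum →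
    blockIdx (lam ++ lam') i = blockIdx lam i
  | [], _, _, h => by simp at h
  | k :: ks, lam', i, h => by
    simp only [List.cons_append, blockIdx]
    split_ifs
    · rfl
    · rw [blockIdx_append_of_lt ks lam' (by simp at h; omega)]

theorem blockIdx_append_of_le : ∀ (lam lam' : List ℕ) {i : ℕ}, lam.sum ≤ i →
    blockIdx (lam ++ lam') i = lam.length + blockIdx lam' (i - lam.sum)
  | [], _, _, _ => by simp
  | k :: ks, lam', i, h => by
    simp only [List.sum_cons] at h
    simp only [List.cons_append, blockIdx, if_neg (show ¬i < k by omega),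
      blockIdx_append_of_le ks lam' (show ks.sum ≤ i - k by omega), List.length_cons,
      List.sum_cons, Nat.sub_sub]
    omega

theorem blockIdx_lt_length : ∀ (lam : List ℕ) {i : ℕ}, i < lam.sum → blockIdx lam i < lam.length
  | [], _, h => by simp at h
  | k :: ks, i, h => by
    simp only [List.sum_cons] at h
    simp only [blockIdx, List.length_cons]
    split_ifs
    · omega
    · exact Nat.succ_lt_succ (blockIdx_lt_length ks (by omega))

theorem blockIdx_map_sum : ∀ (ss : List (List ℕ)) (i : ℕ),
    blockIdx (ss.map List.sum) i = blockIdx (ss.map List.length) (blockIdx ss.flatten i)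
  | [], _ => rfl
  | g :: ss, i => by
    simp only [List.map_cons, List.flatten_cons, blockIdx]
    by_cases hi : i < g.sum
    · rw [if_pos hi, blockIdx_append_of_lt _ _ hi, if_pos (blockIdx_lt_length g hi)]
    · rw [if_neg hi, blockIdx_append_of_le _ _ (not_lt.1 hi), if_neg (by omega),
        Nat.add_sub_cancel_left, blockIdx_map_sum ss]

def Coarsens (lam lam' : List ℕ) : Prop :=
  ∀ i i', blockIdx lam' i = blockIdx lam' i' → blockIdx lam i = blockIdx lam i'

instance : Trans Coarsens Coarsens Coarsens := ⟨fun h h' i i' hii => h i i' (h' i i' hii)⟩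

theorem Refines.coarsens {lam lam' : List ℕ} (h : Refines lam lam') : Coarsens lam lam' := by
  obtain ⟨ss, rfl, rfl, -⟩ := h
  intro i i' hii
  rw [blockIdx_map_sum, blockIdx_map_sum, hii]

def blockPositions (lam : List ℕ) (j : ℕ) : List ℕ :=
  (List.range lam.sum).filter (blockIdx lam · = j)

theorem mem_blockPositions {lam : List ℕ} {j a : ℕ} :
    a ∈ blockPositions lam j ↔ a < lam.sum ∧ blockIdx lam a = j := by
  simp [blockPositions]

theorem length_blockPositions : ∀ (lam : List ℕ) (j : Fin lam.length),
    (blockPositions lam j).length = lam[j]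
  | [], j => j.elim0
  | k :: ks, j => by
    have hshift : ∀ i, blockIdx (k :: ks) (k + i) = blockIdx ks i + 1 := fun i => by
      simp [blockIdx]
    rw [blockPositions, List.sum_cons, List.range_add, List.filter_append, List.length_append,
      List.filter_map, List.length_map]
    have hlow : ∀ i ∈ List.range k, blockIdx (k :: ks) i = 0 := fun i hi => by
      simp [blockIdx, List.mem_range.1 hi]
    obtain ⟨_ | j, hj⟩ := j
    · rw [List.filter_eq_self.2 (by simpa using hlow), List.filter_eq_nil_iff.2 (by simp [hshift])]
      simp
    · rw [List.filter_eq_nil_iff.2 (by simp +contextual [hlow])]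
      simpa [Function.comp_def, hshift, blockPositions] using
        length_blockPositions ks ⟨j, by simpa using hj⟩

theorem patternOfPair_eq_map_of_pairwise {e f : Finset ℤ} {L : List ℤ}
    (hL : L.Pairwise (· < ·)) (hmem : ∀ z, z ∈ L ↔ z ∈ e ∨ z ∈ f) :
    patternOfPair e f = L.map (fun z => decide (z ∈ e)) := by
  have hef : e ∪ f = L.toFinset := by ext z; simp [hmem]
  rw [patternOfPair, hef, (List.toFinset_sort _ (hL.imp ne_of_lt)).2 (hL.imp le_of_lt)]

theorem patternOfPair_comm {e f : Finset ℤ} (h : Disjoint e f) :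
    patternOfPair f e = (patternOfPair e f).map not := by
  rw [patternOfPair, patternOfPair, Finset.union_comm f e, List.map_map]
  refine List.map_congr_left fun z hz => ?_
  rcases Finset.mem_union.1 ((Finset.mem_sort _).1 hz) with hze | hzf
  · simp [hze, Finset.disjoint_left.1 h hze]
  · simp [hzf, Finset.disjoint_right.1 h hzf]

section Interleave

variable {lam : List ℕ} {τ : Fin lam.length → Bool} {x y : ℕ → ℤ}

def blockMerge (lam : List ℕ) (τ : Fin lam.length → Bool) (x y : ℕ → ℤ) (j : Fin lam.length) :
    List ℤ :=
  if τ j then (blockPositions lam j).map x ++ (blockPositions lam j).map y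
  else (blockPositions lam j).map y ++ (blockPositions lam j).map x

theorem mem_blockMerge {j : Fin lam.length} {z : ℤ} :
    z ∈ blockMerge lam τ x y j ↔ ∃ a ∈ blockPositions lam j, x a = z ∨ y a = z := by
  unfold blockMerge
  split_ifs <;> simp only [List.mem_append, List.mem_map] <;> aesop

theorem mem_flatten_blockMerge {z : ℤ} :
    z ∈ (List.ofFn (blockMerge lam τ x y)).flatten ↔
      z ∈ (range lam.sum).image x ∨ z ∈ (range lam.sum).image y := by
  simp only [List.mem_flatten, List.mem_ofFn', Set.mem_range, mem_image, mem_range]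
  constructor
  · rintro ⟨_, ⟨j, rfl⟩, hz⟩
    obtain ⟨a, ha, rfl | rfl⟩ := mem_blockMerge.1 hz
    exacts [.inl ⟨a, (mem_blockPositions.1 ha).1, rfl⟩, .inr ⟨a, (mem_blockPositions.1 ha).1, rfl⟩]
  · rintro (⟨a, ha, rfl⟩ | ⟨a, ha, rfl⟩) <;>
      refine ⟨_, ⟨⟨_, blockIdx_lt_length lam ha⟩, rfl⟩, mem_blockMerge.2 ⟨a, ?_, by simp⟩⟩ <;>
      exact mem_blockPositions.2 ⟨ha, rfl⟩

variable (hx : StrictMonoOn x (Set.Iio lam.sum)) (hy : StrictMonoOn y (Set.Iio lam.sum))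
  (hlt : ∀ a < lam.sum, ∀ b < lam.sum, blockIdx lam a < blockIdx lam b → x a < y b ∧ y a < x b)
  (heq : ∀ j : Fin lam.length, ∀ a < lam.sum, ∀ b < lam.sum, blockIdx lam a = j →
    blockIdx lam b = j → if τ j then x a < y b else y b < x a)

include hlt heq in
theorem ne_of_blockwise_order {a b : ℕ} (ha : a < lam.sum) (hb : b < lam.sum) : x a ≠ y b := by
  rcases lt_trichotomy (blockIdx lam a) (blockIdx lam b) with h | h | h
  · exact (hlt a ha b hb h).1.ne
  · have := heq ⟨_, blockIdx_lt_length lam ha⟩ a ha b hb rfl h.symm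
    split_ifs at this
    exacts [this.ne, this.ne']
  · exact (hlt b hb a ha h).2.ne'

include hx hy hlt heq in
theorem pairwise_flatten_blockMerge :
    (List.ofFn (blockMerge lam τ x y)).flatten.Pairwise (· < ·) := by
  have hpos : ∀ j, (blockPositions lam j).Pairwise (· < ·) := fun j =>
    List.pairwise_lt_range.filter _
  have hmono : ∀ {f : ℕ → ℤ}, StrictMonoOn f (Set.Iio lam.sum) → ∀ j,
      ((blockPositions lam j).map f).Pairwise (· < ·) := fun hf j =>
    List.pairwise_map.2 <| (hpos j).imp_of_mem fun ha hb hab =>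
      hf (mem_blockPositions.1 ha).1 (mem_blockPositions.1 hb).1 hab
  refine List.pairwise_flatten.2 ⟨fun l hl => ?_, List.pairwise_ofFn.2 fun j j' hjj' => ?_⟩
  · obtain ⟨j, rfl⟩ := List.mem_ofFn.1 hl
    have hcross := heq j
    unfold blockMerge
    split_ifs with hτ <;> refine List.pairwise_append.2 ⟨hmono ‹_› j, hmono ‹_› j, ?_⟩ <;>
      simp only [List.mem_map, mem_blockPositions] <;>
      rintro _ ⟨a, ⟨ha, haj⟩, rfl⟩ _ ⟨b, ⟨hb, hbj⟩, rfl⟩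
    · simpa [hτ] using hcross a ha b hb haj hbj
    · simpa [hτ] using hcross b hb a ha hbj haj
  · intro z hz w hw
    obtain ⟨a, ha, hza⟩ := mem_blockMerge.1 hz
    obtain ⟨b, hb, hwb⟩ := mem_blockMerge.1 hw
    rw [mem_blockPositions] at ha hb
    have hblk : blockIdx lam a < blockIdx lam b := by rw [ha.2, hb.2]; exact hjj'
    have hab : a < b := (blockIdx_mono lam).reflect_lt hblk
    obtain ⟨hxy, hyx⟩ := hlt a ha.1 b hb.1 hblk
    rcases hza with rfl | rfl <;> rcases hwb with rfl | rfl
    exacts [hx ha.1 hb.1 hab, hxy, hyx, hy ha.1 hb.1 hab]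

include hlt heq in
theorem map_mem_blockMerge (j : Fin lam.length) :
    (blockMerge lam τ x y j).map (fun z => decide (z ∈ (range lam.sum).image x)) =
      pblock lam[j] (τ j) := by
  have hlen := length_blockPositions lam j
  have hX : ((blockPositions lam j).map x).map (fun z => decide (z ∈ (range lam.sum).image x)) =
      List.replicate lam[j] true := by
    refine List.eq_replicate_iff.2 ⟨by simp [hlen], ?_⟩
    simp only [List.mem_map, mem_blockPositions]
    rintro _ ⟨_, ⟨a, ⟨ha, -⟩, rfl⟩, rfl⟩
    simpa using ⟨a, ha, rfl⟩
  have hY : ((blockPositions lam j).map y).map (fun z => decide (z ∈ (range lam.sum).image x)) =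
      List.replicate lam[j] false := by
    refine List.eq_replicate_iff.2 ⟨by simp [hlen], ?_⟩
    simp only [List.mem_map, mem_blockPositions]
    rintro _ ⟨_, ⟨a, ⟨ha, -⟩, rfl⟩, rfl⟩
    simpa using fun b hb => ne_of_blockwise_order hlt heq hb ha
  unfold blockMerge pblock
  split_ifs <;> rw [List.map_append, hX, hY]

include hx hy hlt heq in
theorem patternOfPair_image_eq_patternOfParts :
    Disjoint ((range lam.sum).image x) ((range lam.sum).image y) ∧
      patternOfPair ((range lam.sum).image x) ((range lam.sum).image y) = patternOfParts lam τ := by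
  refine ⟨Finset.disjoint_left.2 ?_, ?_⟩
  · simp only [mem_image, mem_range]
    rintro _ ⟨a, ha, rfl⟩ ⟨b, hb, hba⟩
    exact ne_of_blockwise_order hlt heq ha hb hba.symm
  · rw [patternOfPair_eq_map_of_pairwise (pairwise_flatten_blockMerge hx hy hlt heq)
      fun z => mem_flatten_blockMerge, List.map_flatten, List.map_ofFn, patternOfParts]
    congr 2
    ext1 j
    exact map_mem_blockMerge hlt heq j

end Interleave

theorem List.map_append_cons_lt {κ β : Type*} [LinearOrder β] {F G : κ → β} {u v : β}
    {L L' : List β} : ∀ {K : List κ}, (∀ k ∈ K, F k ≤ G k) → u < v →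
      K.map F ++ u :: L < K.map G ++ v :: L'
  | [], _, huv => List.Lex.rel huv
  | k :: K, hle, huv => by
    rcases (hle k List.mem_cons_self).lt_or_eq with h | h
    · exact List.Lex.rel h
    · rw [List.map_cons, List.map_cons, h]
      exact List.Lex.cons
        (map_append_cons_lt (fun k' hk' => hle k' (List.mem_cons_of_mem _ hk')) huv)

def rank {β : Type*} [LinearOrder β] (X : Finset β) (y : β) : ℕ := #{z ∈ X | z < y}

theorem rank_lt_rank {β : Type*} [LinearOrder β] {X : Finset β} {y y' : β} (hy : y ∈ X)
    (h : y < y') : rank X y < rank X y' := by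
  refine Finset.card_lt_card ((Finset.ssubset_iff_of_subset fun z hz => ?_).2 ⟨y, ?_, ?_⟩)
  · rw [Finset.mem_filter] at hz ⊢
    exact ⟨hz.1, hz.2.trans h⟩
  · simpa using ⟨hy, h⟩
  · simp

/-- A collectable pattern presented by its block sizes and block orientations. -/
abbrev OrientedParts := Σ lam : List ℕ, (Fin lam.length → Bool)

def OrientedParts.pattern (β : OrientedParts) : List Bool := patternOfParts β.1 β.2

def blockOrient {n : ℕ} (τ : Fin n → Bool) (j : ℕ) : Bool :=
  if h : j < n then τ ⟨j, h⟩ else true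

section Points

variable {t t' : List Bool → ℕ} {β : OrientedParts} {a b : ℕ}

def coord (t : List Bool → ℕ) (i : ℕ) (β : OrientedParts) : ℕ ×ₗ ℤ :=
  toLex (blockIdx β.1 i,
    if blockOrient β.2 (blockIdx β.1 i) then (t β.pattern : ℤ) else -(t β.pattern : ℤ))

theorem coord_eq_coord (h : blockIdx β.1 a = blockIdx β.1 b) (ht : t β.pattern = t' β.pattern) :
    coord t a β = coord t' b β := by
  rw [coord, coord, h, ht]

theorem coord_lt_coord (h : blockIdx β.1 a < blockIdx β.1 b) : coord t a β < coord t' b β :=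
  Prod.Lex.toLex_lt_toLex.2 (.inl h)

theorem coord_le_coord (hab : a ≤ b) (ht : t β.pattern = t' β.pattern) :
    coord t a β ≤ coord t' b β := by
  rcases (blockIdx_mono β.1 hab).lt_or_eq with h | h
  exacts [(coord_lt_coord h).le, (coord_eq_coord h ht).le]

theorem coord_lt_coord_of_blockIdx_eq (h : blockIdx β.1 a = blockIdx β.1 b)
    (ht : t β.pattern < t' β.pattern) :
    if blockOrient β.2 (blockIdx β.1 a) then coord t a β < coord t' b β
    else coord t' b β < coord t a β := by
  simp only [coord, ← h, Prod.Lex.toLex_lt_toLex]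
  split_ifs <;> simp [ht]

/-- The last entry `i` keeps the points of one edge distinct. -/
def point (K : List OrientedParts) (t : List Bool → ℕ) (i : ℕ) : List (ℕ ×ₗ ℤ) :=
  K.map (coord t i) ++ [toLex (i, 0)]

theorem point_strictMono (K : List OrientedParts) (t : List Bool → ℕ) : StrictMono (point K t) :=
  fun _ _ hab => List.map_append_cons_lt (fun _ _ => coord_le_coord hab.le rfl)
    (Prod.Lex.toLex_lt_toLex.2 (.inl hab))

variable {K₁ K₂ : List OrientedParts} {β₀ : OrientedParts}

theorem point_lt_point_of_blockIdx_lt (hagree : ∀ β ∈ K₁, t β.pattern = t' β.pattern)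
    (h : blockIdx β₀.1 a < blockIdx β₀.1 b) :
    point (K₁ ++ β₀ :: K₂) t a < point (K₁ ++ β₀ :: K₂) t' b := by
  simp only [point, List.map_append, List.map_cons, List.append_assoc, List.cons_append]
  exact List.map_append_cons_lt
    (fun β hβ => coord_le_coord ((blockIdx_mono _).reflect_lt h).le (hagree β hβ))
    (coord_lt_coord h)

theorem point_lt_point_of_blockIdx_eq (hcoarse : ∀ β ∈ K₁, Coarsens β.1 β₀.1)
    (hagree : ∀ β ∈ K₁, t β.pattern = t' β.pattern) (h : blockIdx β₀.1 a = blockIdx β₀.1 b)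
    (ht : t β₀.pattern < t' β₀.pattern) :
    if blockOrient β₀.2 (blockIdx β₀.1 a) then
      point (K₁ ++ β₀ :: K₂) t a < point (K₁ ++ β₀ :: K₂) t' b
    else point (K₁ ++ β₀ :: K₂) t' b < point (K₁ ++ β₀ :: K₂) t a := by
  have hsame : ∀ β ∈ K₁, coord t a β = coord t' b β := fun β hβ =>
    coord_eq_coord (hcoarse β hβ a b h) (hagree β hβ)
  have := coord_lt_coord_of_blockIdx_eq (t := t) (t' := t') h ht
  simp only [point, List.map_append, List.map_cons, List.append_assoc, List.cons_append]
  split_ifs at this ⊢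
  · exact List.map_append_cons_lt (fun β hβ => (hsame β hβ).le) this
  · exact List.map_append_cons_lt (fun β hβ => (hsame β hβ).ge) this

end Points

section Edges

variable (K : List OrientedParts) (X : Finset (List (ℕ ×ₗ ℤ)))

/-- The points are transported to `ℤ` by their rank in a finite set `X` containing them. -/
def edge (r : ℕ) (t : List Bool → ℕ) : Finset ℤ :=
  (range r).image fun i => (rank X (point K t i) : ℤ)

variable {K X} {r : ℕ} {t t' : List Bool → ℕ}

theorem rank_point_lt_rank_point {K' : List OrientedParts} {a b : ℕ} (ha : point K t a ∈ X)
    (h : point K t a < point K' t' b) : (rank X (point K t a) : ℤ) < rank X (point K' t' b) :=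
  Nat.cast_lt.2 (rank_lt_rank ha h)

theorem strictMonoOn_rank_point (hX : ∀ i < r, point K t i ∈ X) :
    StrictMonoOn (fun i => (rank X (point K t i) : ℤ)) (Set.Iio r) :=
  fun a ha _ _ hab => rank_point_lt_rank_point (hX a ha) (point_strictMono K t hab)

theorem card_edge (hX : ∀ i < r, point K t i ∈ X) : (edge K X r t).card = r := by
  rw [edge, card_image_of_injOn (by simpa using (strictMonoOn_rank_point hX).injOn), card_range]

theorem edge_pattern {K₁ K₂ : List OrientedParts} {β₀ : OrientedParts}
    (hcoarse : ∀ β ∈ K₁, Coarsens β.1 β₀.1) (hagree : ∀ β ∈ K₁, t β.pattern = t' β.pattern)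
    (ht : t β₀.pattern < t' β₀.pattern)
    (hX : ∀ i < β₀.1.sum, point (K₁ ++ β₀ :: K₂) t i ∈ X ∧ point (K₁ ++ β₀ :: K₂) t' i ∈ X) :
    Disjoint (edge (K₁ ++ β₀ :: K₂) X β₀.1.sum t) (edge (K₁ ++ β₀ :: K₂) X β₀.1.sum t') ∧
      patternOfPair (edge (K₁ ++ β₀ :: K₂) X β₀.1.sum t) (edge (K₁ ++ β₀ :: K₂) X β₀.1.sum t') =
        β₀.pattern := by
  refine patternOfPair_image_eq_patternOfParts (strictMonoOn_rank_point fun i hi => (hX i hi).1)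
    (strictMonoOn_rank_point fun i hi => (hX i hi).2) (fun a ha b hb h => ?_)
    (fun j a ha b hb haj hbj => ?_)
  · exact ⟨rank_point_lt_rank_point (hX a ha).1 (point_lt_point_of_blockIdx_lt hagree h),
      rank_point_lt_rank_point (hX a ha).2
        (point_lt_point_of_blockIdx_lt (fun β hβ => (hagree β hβ).symm) h)⟩
  · have := point_lt_point_of_blockIdx_eq (K₂ := K₂) hcoarse hagree (haj.trans hbj.symm) ht
    rw [haj, blockOrient, dif_pos j.2] at this
    split_ifs at this ⊢
    exacts [rank_point_lt_rank_point (hX a ha).1 this, rank_point_lt_rank_point (hX b hb).2 this]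

end Edges

def admissibleOrientations (lam : List ℕ) : Finset (Fin lam.length → Bool) :=
  univ.filter fun τ => ∀ h : 0 < lam.length, τ ⟨0, h⟩ = true

noncomputable def chainCoords (c : List (List ℕ)) : List OrientedParts :=
  c.flatMap fun lam => (admissibleOrientations lam).toList.map (⟨lam, ·⟩)

section ChainCoords

variable {c : List (List ℕ)}

theorem mem_chainCoords {β : OrientedParts} :
    β ∈ chainCoords c ↔ β.1 ∈ c ∧ β.2 ∈ admissibleOrientations β.1 := by
  refine ⟨fun h => ?_, fun h =>
    List.mem_flatMap.2 ⟨β.1, h.1, List.mem_map.2 ⟨β.2, mem_toList.2 h.2, rfl⟩⟩⟩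
  obtain ⟨lam, hlam, hβ⟩ := List.mem_flatMap.1 h
  obtain ⟨τ, hτ, rfl⟩ := List.mem_map.1 hβ
  exact ⟨hlam, mem_toList.1 hτ⟩

theorem mem_chainPatterns {P : List Bool} :
    P ∈ chainPatterns c ↔ ∃ β ∈ chainCoords c, β.pattern = P := by
  have hfold : P ∈ chainPatterns c ↔ ∃ lam ∈ c, P ∈ patternFinset lam := by
    induction c with
    | nil => simp [chainPatterns]
    | cons lam c ih => simp [chainPatterns, ← ih]
  rw [hfold]
  constructor
  · rintro ⟨lam, hlam, hP⟩
    obtain ⟨τ, hτ, rfl⟩ := mem_image.1 hP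
    exact ⟨⟨lam, τ⟩, mem_chainCoords.2 ⟨hlam, hτ⟩, rfl⟩
  · rintro ⟨β, hβ, rfl⟩
    exact ⟨β.1, (mem_chainCoords.1 hβ).1, mem_image.2 ⟨β.2, (mem_chainCoords.1 hβ).2, rfl⟩⟩

theorem pairwise_coarsens_chainCoords (hc : c.IsChain Refines) :
    (chainCoords c).Pairwise fun β β' => Coarsens β.1 β'.1 := by
  have hc' : c.Pairwise Coarsens := (hc.imp fun _ _ => Refines.coarsens).pairwise
  refine List.pairwise_flatMap.2 ⟨fun lam _ => ?_, hc'.imp fun h β hβ β' hβ' => ?_⟩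
  · exact List.pairwise_map.2 (List.pairwise_of_forall fun _ _ _ _ h => h)
  · obtain ⟨_, -, rfl⟩ := List.mem_map.1 hβ
    obtain ⟨_, -, rfl⟩ := List.mem_map.1 hβ'
    exact h

end ChainCoords

theorem head?_eq_some_true_of_mem_patternFinset {r : ℕ} {lam : List ℕ} {P : List Bool}
    (hlam : IsOrderedPartition r lam) (hr : 0 < r) (hP : P ∈ patternFinset lam) :
    P.head? = some true := by
  obtain ⟨τ, hτ, rfl⟩ := mem_image.1 hP
  match lam, hlam with
  | [], hlam => simp [IsOrderedPartition] at hlam; omega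
  | k :: ks, hlam =>
    have hk : 0 < k := hlam.2 k List.mem_cons_self
    have hτ0 : τ 0 = true := (mem_filter.1 hτ).2 (by simp)
    obtain ⟨k, rfl⟩ := Nat.exists_eq_succ_of_ne_zero hk.ne'
    simp [patternOfParts, List.ofFn_succ, pblock, hτ0, List.replicate_succ]

theorem eq_of_realizes {e f : Finset ℤ} {P Q : List Bool} (hef : Disjoint e f)
    (hP : Realizes P e f) (hQ : Realizes Q e f) (hPh : P.head? = some true)
    (hQh : Q.head? = some true) : P = Q := by
  have hswap := patternOfPair_comm hef
  rcases hP with rfl | rfl <;> rcases hQ with rfl | rfl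
  · rfl
  · simp [hswap, List.head?_map, hPh] at hQh
  · simp [hswap, List.head?_map, hQh] at hPh
  · rfl

section Chain

variable {r : ℕ} {c : List (List ℕ)}

theorem IsPartitionChain.pos_of_mem_chainPatterns (hc : IsPartitionChain r c) {Q : List Bool}
    (hQ : Q ∈ chainPatterns c) : 0 < r := by
  obtain ⟨β, hβ, -⟩ := mem_chainPatterns.1 hQ
  rw [← hc.1]
  exact List.length_pos_of_mem (mem_chainCoords.1 hβ).1

theorem IsPartitionChain.head?_eq_some_true (hc : IsPartitionChain r c) {Q : List Bool}
    (hQ : Q ∈ chainPatterns c) : Q.head? = some true := by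
  obtain ⟨β, hβ, rfl⟩ := mem_chainPatterns.1 hQ
  exact head?_eq_some_true_of_mem_patternFinset (hc.2.1 _ (mem_chainCoords.1 hβ).1)
    (hc.pos_of_mem_chainPatterns hQ) (mem_image.2 ⟨β.2, (mem_chainCoords.1 hβ).2, rfl⟩)

theorem IsPartitionChain.exists_realizes_edge (hc : IsPartitionChain r c)
    {X : Finset (List (ℕ ×ₗ ℤ))} {t t' : List Bool → ℕ}
    (hX : ∀ i < r, point (chainCoords c) t i ∈ X ∧ point (chainCoords c) t' i ∈ X)
    (hdiff : ∃ P ∈ chainPatterns c, t P ≠ t' P) :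
    ∃ Q ∈ chainPatterns c, t Q ≠ t' Q ∧
      Disjoint (edge (chainCoords c) X r t) (edge (chainCoords c) X r t') ∧
      Realizes Q (edge (chainCoords c) X r t) (edge (chainCoords c) X r t') := by
  obtain ⟨P, hP, hne⟩ := hdiff
  obtain ⟨β, hβ, rfl⟩ := mem_chainPatterns.1 hP
  -- `β₀` is the first coordinate on which `t` and `t'` differ
  obtain ⟨β₀, K₁, K₂, hagree, hne₀, hK, -⟩ :=
    List.exists_of_eraseP (p := fun β => t β.pattern ≠ t' β.pattern) hβ (by simpa using hne)
  simp only [decide_eq_true_eq, ne_eq, not_not] at hagree hne₀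
  have hβ₀ : β₀ ∈ chainCoords c := hK ▸ List.mem_append_right _ List.mem_cons_self
  have hsum : β₀.1.sum = r := (hc.2.1 _ (mem_chainCoords.1 hβ₀).1).1
  have hcoarse : ∀ β ∈ K₁, Coarsens β.1 β₀.1 := by
    have := pairwise_coarsens_chainCoords hc.2.2.2
    rw [hK, List.pairwise_append] at this
    exact fun β hβ => this.2.2 β hβ β₀ List.mem_cons_self
  refine ⟨β₀.pattern, mem_chainPatterns.2 ⟨β₀, hβ₀, rfl⟩, hne₀, ?_⟩
  rw [hK, ← hsum] at hX ⊢
  rcases Nat.lt_or_gt_of_ne hne₀ with hlt | hgt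
  · obtain ⟨hd, hp⟩ := edge_pattern hcoarse hagree hlt hX
    exact ⟨hd, .inl hp⟩
  · obtain ⟨hd, hp⟩ := edge_pattern hcoarse (fun β hβ => (hagree β hβ).symm) hgt
      fun i hi => (hX i hi).symm
    exact ⟨hd.symm, .inr hp⟩

variable (m : List Bool → ℕ)

noncomputable def matchingLabels (c : List (List ℕ)) : Finset (List Bool →₀ ℕ) :=
  (chainPatterns c).finsupp fun P => range (m P)

noncomputable def matchingPoints (r : ℕ) (c : List (List ℕ)) : Finset (List (ℕ ×ₗ ℤ)) :=
  (matchingLabels m c).biUnion fun t => (range r).image (point (chainCoords c) t)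

noncomputable def matchingEdge (r : ℕ) (c : List (List ℕ)) (t : List Bool →₀ ℕ) : Finset ℤ :=
  edge (chainCoords c) (matchingPoints m r c) r t

variable {m} {t t' : List Bool →₀ ℕ}

theorem point_mem_matchingPoints (ht : t ∈ matchingLabels m c) {i : ℕ} (hi : i < r) :
    point (chainCoords c) t i ∈ matchingPoints m r c :=
  mem_biUnion.2 ⟨t, ht, mem_image_of_mem _ (mem_range.2 hi)⟩

theorem card_matchingEdge (ht : t ∈ matchingLabels m c) : (matchingEdge m r c t).card = r :=
  card_edge fun _ => point_mem_matchingPoints ht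

theorem exists_ne_of_mem_matchingLabels (ht : t ∈ matchingLabels m c)
    (ht' : t' ∈ matchingLabels m c) (hne : t ≠ t') :
    ∃ P ∈ chainPatterns c, t P ≠ t' P := by
  by_contra! h
  rw [matchingLabels, mem_finsupp_iff] at ht ht'
  refine hne (Finsupp.ext fun P => ?_)
  by_cases hP : P ∈ chainPatterns c
  · exact h P hP
  · rw [Finsupp.notMem_support_iff.1 (mt (ht.1 ·) hP),
      Finsupp.notMem_support_iff.1 (mt (ht'.1 ·) hP)]

theorem IsPartitionChain.exists_realizes_matchingEdge (hc : IsPartitionChain r c)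
    (ht : t ∈ matchingLabels m c) (ht' : t' ∈ matchingLabels m c) (hne : t ≠ t') :
    ∃ Q ∈ chainPatterns c, t Q ≠ t' Q ∧ Disjoint (matchingEdge m r c t) (matchingEdge m r c t') ∧
      Realizes Q (matchingEdge m r c t) (matchingEdge m r c t') :=
  hc.exists_realizes_edge (fun _ hi => ⟨point_mem_matchingPoints ht hi,
    point_mem_matchingPoints ht' hi⟩) (exists_ne_of_mem_matchingLabels ht ht' hne)

theorem IsPartitionChain.injOn_matchingEdge (hc : IsPartitionChain r c) :
    Set.InjOn (matchingEdge m r c) (matchingLabels m c) := by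
  intro t ht t' ht' heq
  by_contra hne
  obtain ⟨Q, hQ, -, hd, -⟩ := hc.exists_realizes_matchingEdge ht ht' hne
  rw [heq, disjoint_self_iff_empty] at hd
  have := card_matchingEdge (m := m) (r := r) ht'
  rw [hd, card_empty] at this
  exact (hc.pos_of_mem_chainPatterns hQ).ne this

theorem IsPartitionChain.card_le_of_isPClique (hc : IsPartitionChain r c) {P : List Bool}
    (hP : Collectable r P) {S : Finset (Finset ℤ)}
    (hS : S ⊆ (matchingLabels m c).image (matchingEdge m r c)) (hcl : IsPClique P S) :
    S.card ≤ max 1 (m P) := by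
  have hlab : ∀ e ∈ S, ∃ t ∈ matchingLabels m c, matchingEdge m r c t = e := fun e he =>
    mem_image.1 (hS he)
  choose! lab hlab hlabe using hlab
  have hsep : ∀ e ∈ S, ∀ f ∈ S, e ≠ f → P ∈ chainPatterns c ∧ lab e P ≠ lab f P := by
    intro e he f hf hef
    obtain ⟨Q, hQ, hne, hd, hreal⟩ := hc.exists_realizes_matchingEdge (hlab e he) (hlab f hf)
      fun h => hef (by rw [← hlabe e he, ← hlabe f hf, h])
    rw [hlabe e he, hlabe f hf] at hd hreal
    obtain ⟨lam, hlam, hPlam⟩ := hP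
    obtain rfl := eq_of_realizes hd (hcl e he f hf hef) hreal
      (head?_eq_some_true_of_mem_patternFinset hlam (hc.pos_of_mem_chainPatterns hQ) hPlam)
      (hc.head?_eq_some_true hQ)
    exact ⟨hQ, hne⟩
  by_cases hPU : P ∈ chainPatterns c
  · refine (card_le_card_of_injOn (fun e => lab e P) (t := range (m P)) (fun e he => ?_)
      fun e he f hf h => ?_).trans ((card_range _).trans_le (le_max_right _ _))
    · exact (mem_finsupp_iff.1 (hlab e he)).2 P hPU
    · by_contra hef
      exact (hsep e he f hf hef).2 h
  · refine (card_le_one.2 fun e he f hf => ?_).trans (le_max_left _ _)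
    by_contra hef
    exact hPU (hsep e he f hf hef).1

end Chain

def canonicalChain (r : ℕ) : List (List ℕ) :=
  (List.range r).map fun s => (r - s) :: List.replicate s 1

theorem isPartitionChain_canonicalChain (r : ℕ) : IsPartitionChain r (canonicalChain r) := by
  refine ⟨by simp [canonicalChain], ?_, fun i h => by simp [canonicalChain], ?_⟩
  · simp only [canonicalChain, List.mem_map, List.mem_range]
    rintro _ ⟨s, hs, rfl⟩
    refine ⟨by simp; omega, fun k hk => ?_⟩
    rcases List.mem_cons.1 hk with rfl | hk
    · omega
    · rw [List.eq_of_mem_replicate hk]; omega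
  · refine List.isChain_iff_getElem.2 fun i hi => ?_
    simp only [canonicalChain, List.length_map, List.length_range] at hi
    simp only [canonicalChain, List.getElem_map, List.getElem_range]
    refine ⟨[r - (i + 1), 1] :: List.replicate i [1], ?_, ?_, ?_⟩
    · simp [List.flatten_replicate_singleton, List.replicate_succ]
    · simp only [List.map_cons, List.map_replicate, List.sum_cons, List.sum_nil]
      congr 1
      omega
    · simp +contextual [List.mem_replicate]

theorem length_patternOfParts (lam : List ℕ) (τ : Fin lam.length → Bool) :
    (patternOfParts lam τ).length = 2 * lam.sum := by
  have hblock : ∀ k b, (pblock k b).length = 2 * k := fun k b => by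
    unfold pblock; split_ifs <;> simp [two_mul]
  rw [patternOfParts, List.length_flatten, List.map_ofFn, List.sum_ofFn]
  simp only [Function.comp_def, List.get_eq_getElem, hblock, ← Finset.mul_sum]
  rw [← List.sum_ofFn, List.ofFn_getElem]

theorem exists_isPartitionChain_max (r : ℕ) (m : List Bool → ℕ) :
    ∃ c, IsPartitionChain r c ∧ ∀ c', IsPartitionChain r c' →
      ∏ P ∈ chainPatterns c', m P ≤ ∏ P ∈ chainPatterns c, m P := by
  classical
  set A : Finset (List Bool) := univ.image fun v : List.Vector Bool (2 * r) => v.toList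
  have hbound : ∀ c', IsPartitionChain r c' → ∏ P ∈ chainPatterns c', m P ≤ ∏ P ∈ A, (m P + 1) := by
    intro c' hc'
    have hsub : chainPatterns c' ⊆ A := fun P hP => by
      obtain ⟨β, hβ, rfl⟩ := mem_chainPatterns.1 hP
      have hlen : β.pattern.length = 2 * r := by
        rw [OrientedParts.pattern, length_patternOfParts, (hc'.2.1 _ (mem_chainCoords.1 hβ).1).1]
      exact mem_image.2 ⟨⟨_, hlen⟩, mem_univ _, rfl⟩
    exact (prod_le_prod' fun P _ => Nat.le_succ _).trans
      (prod_le_prod_of_subset_of_one_le' hsub fun _ _ _ => Nat.le_add_left _ _)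
  set S : Set ℕ := {n | ∃ c, IsPartitionChain r c ∧ ∏ P ∈ chainPatterns c, m P = n}
  have hS : BddAbove S := ⟨_, by rintro _ ⟨c, hc, rfl⟩; exact hbound c hc⟩
  have hS' : S.Nonempty := ⟨_, canonicalChain r, isPartitionChain_canonicalChain r, rfl⟩
  obtain ⟨c, hc, hcS⟩ := Nat.sSup_mem hS' hS
  exact ⟨c, hc, fun c' hc' => hcS ▸ le_csSup hS ⟨c', hc', rfl⟩⟩

theorem ordered_matching_multiparameter_lower_general (r : ℕ)
    (m : List Bool → ℕ) (hm : ∀ P : List Bool, Collectable r P → 0 < m P) :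
    ∃ H : Finset (Finset ℤ),
      (∀ e ∈ H, e.card = r) ∧
      (∀ e ∈ H, ∀ f ∈ H, e ≠ f → Disjoint e f) ∧
      (∀ P : List Bool, Collectable r P → ∀ S ⊆ H, IsPClique P S → S.card ≤ m P) ∧
      (∃ c : List (List ℕ), IsPartitionChain r c ∧ H.card = ∏ P ∈ chainPatterns c, m P) ∧
      (∀ c : List (List ℕ), IsPartitionChain r c → ∏ P ∈ chainPatterns c, m P ≤ H.card) := by
  obtain ⟨c, hc, hmax⟩ := exists_isPartitionChain_max r m
  have hcard :
      ((matchingLabels m c).image (matchingEdge m r c)).card = ∏ P ∈ chainPatterns c, m P := by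
    rw [card_image_of_injOn hc.injOn_matchingEdge, matchingLabels, card_finsupp]
    simp
  refine ⟨(matchingLabels m c).image (matchingEdge m r c), ?_, ?_,
    fun P hP S hS hcl => (hc.card_le_of_isPClique hP hS hcl).trans (max_le (hm P hP) le_rfl),
    ⟨c, hc, hcard⟩, fun c' hc' => hcard ▸ hmax c' hc'⟩
  · simp only [mem_image]
    rintro _ ⟨t, ht, rfl⟩
    exact card_matchingEdge ht
  · simp only [mem_image]
    rintro _ ⟨t, ht, rfl⟩ _ ⟨t', ht', rfl⟩ hne
    obtain ⟨-, -, -, hd, -⟩ := hc.exists_realizes_matchingEdge ht ht' (ne_of_apply_ne _ hne)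
    exact hd

/-- **Multi-parameter lower bound.** There is a collection `H` of pairwise disjoint `r`-element
subsets of `ℤ` in which every `P`-clique has size at most `m P` for every collectable pattern
`P`, and whose size equals the maximum over all chains `λ⁽¹⁾ ≻ … ≻ λ⁽ʳ⁾` of ordered partitions
of `r` of `∏_{P ∈ 𝒫(λ⁽¹⁾) ∪ … ∪ 𝒫(λ⁽ʳ⁾)} m P` (stated as: the maximum is attained by some
chain, and no chain gives a larger product). -/
theorem ordered_matching_multiparameter_lower (r : ℕ) (hr : 1 ≤ r)
    (m : List Bool → ℕ) (hm : ∀ P : List Bool, Collectable r P → 0 < m P) :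
    ∃ H : Finset (Finset ℤ),
      (∀ e ∈ H, e.card = r) ∧
      (∀ e ∈ H, ∀ f ∈ H, e ≠ f → Disjoint e f) ∧
      (∀ P : List Bool, Collectable r P → ∀ S ⊆ H, IsPClique P S → S.card ≤ m P) ∧
      (∃ c : List (List ℕ), IsPartitionChain r c ∧ H.card = ∏ P ∈ chainPatterns c, m P) ∧
      (∀ c : List (List ℕ), IsPartitionChain r c → ∏ P ∈ chainPatterns c, m P ≤ H.card) :=
  ordered_matching_multiparameter_lower_general r m hm
end

section
/- For every ordered partition λ = (λ_1,…,λ_s) of r, the number of collectable r-patterns whose block partition has blocks of sizes 2λ_1,…,2λ_s (in order) is exactly 2^{s−1}. -/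
/-!
A pattern in `patternFinset lam` is determined by the orientations of its blocks, and conversely
the orientations are read off the pattern: the blocks have the prescribed lengths `2·λᵢ`, and the
first letter of a nonempty block is its orientation. So the patterns correspond bijectively to
orientation vectors whose first entry is `A`, and there are `2^(s-1)` of these.
-/

open Finset

lemma pblock_length (k : ℕ) (b : Bool) : (pblock k b).length = 2 * k := by
  cases b <;> simp [pblock] <;> ring

lemma pblock_injective {k : ℕ} (hk : 0 < k) : Function.Injective (pblock k) := by
  obtain ⟨m, rfl⟩ := Nat.exists_eq_succ_of_ne_zero hk.ne'
  intro b b' h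
  cases b <;> cases b' <;> simp_all [pblock, List.replicate_succ]

lemma patternOfParts_cons (k : ℕ) (lam : List ℕ) (τ : Fin (k :: lam).length → Bool) :
    patternOfParts (k :: lam) τ = pblock k (τ 0) ++ patternOfParts lam (Fin.tail τ) := by
  simp [patternOfParts, List.ofFn_succ, Fin.tail]

lemma patternOfParts_injective {lam : List ℕ} (hpos : ∀ k ∈ lam, 0 < k) :
    Function.Injective (patternOfParts lam) := by
  induction lam with
  | nil => intro τ₁ τ₂ _; funext i; exact i.elim0
  | cons k lam ih =>
    intro τ₁ τ₂ h
    rw [patternOfParts_cons, patternOfParts_cons] at h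
    obtain ⟨hhead, htail⟩ := List.append_inj h (by simp only [pblock_length])
    have h0 : τ₁ 0 = τ₂ 0 := pblock_injective (hpos k List.mem_cons_self) hhead
    have htail' : Fin.tail τ₁ = Fin.tail τ₂ :=
      ih (fun m hm => hpos m (List.mem_cons_of_mem k hm)) htail
    rw [← Fin.cons_self_tail τ₁, ← Fin.cons_self_tail τ₂, h0, htail']

lemma card_filter_apply_zero_eq_true (n : ℕ) :
    #{τ : Fin n → Bool | ∀ h : 0 < n, τ ⟨0, h⟩ = true} = 2 ^ (n - 1) := by
  cases n with
  | zero => simp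
  | succ n =>
    have himage : ({τ : Fin (n + 1) → Bool | ∀ h : 0 < n + 1, τ ⟨0, h⟩ = true} : Finset _)
        = (univ : Finset (Fin n → Bool)).image (Fin.cons true) := by
      ext τ
      simp only [mem_filter, mem_univ, true_and, mem_image]
      constructor
      · intro h
        exact ⟨Fin.tail τ, by rw [← h n.succ_pos]; exact Fin.cons_self_tail τ⟩
      · rintro ⟨σ, rfl⟩ _
        rfl
    rw [himage, card_image_of_injective _ (Fin.cons_right_injective _)]
    simp

theorem patternFinset_card_general (r s : ℕ) (lam : List ℕ)
    (hlam : IsOrderedPartition r lam) (hlen : lam.length = s) :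
    (patternFinset lam).card = 2 ^ (s - 1) := by
  rw [patternFinset, card_image_of_injective _ (patternOfParts_injective hlam.2),
    card_filter_apply_zero_eq_true, hlen]

/-- For every ordered partition `lam` of `r` with `s` parts, there are exactly `2^(s-1)`
collectable `r`-patterns whose block partition has block sizes `2·lam 0, …, 2·lam (s-1)`. -/
theorem patternFinset_card (r s : ℕ) (hr : 0 < r) (lam : List ℕ)
    (hlam : IsOrderedPartition r lam) (hlen : lam.length = s) :
    (patternFinset lam).card = 2 ^ (s - 1) :=
  patternFinset_card_general r s lam hlam hlen
end

section
/- Let λ = (λ_1,…,λ_s) be an ordered partition of r with s < r parts, and for each ordered partition λ' of r into s+1 parts with λ ≻ λ' let M_{λ'} be a positive integer, with M = Σ_{λ'} M_{λ'}. Let H be a λ-partite collection of pairwise disjoint r-element subsets of ℤ. Then either (a) there is an interval-wise λ-partite sub-collection H* ⊆ H with |H*| ≥ |H|/(2M), or (b) for some ordered partition λ' of r into s+1 parts with λ ≻ λ', there is a λ'-partite sub-collection H' ⊆ H with |H'| > M_{λ'}. -/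
/-- `H` is `lam`-partite: there are non-integer reals `x 0 < x 1 < … < x s` such that every
`e ∈ H` has exactly `lam.get i` elements in the interval `(x i, x (i+1))`. -/
def IsLamPartite (lam : List ℕ) (H : Finset (Finset ℤ)) : Prop :=
  ∃ x : Fin (lam.length + 1) → ℝ, StrictMono x ∧ (∀ i, ∀ z : ℤ, (z : ℝ) ≠ x i) ∧
    ∀ e ∈ H, ∀ i : Fin lam.length,
      {z : ℤ | z ∈ e ∧ x i.castSucc < (z : ℝ) ∧ (z : ℝ) < x i.succ}.ncard = lam.get i

/-- `H` is interval-wise `lam`-partite: `lam`-partite, and moreover for each `i` the convex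
hulls of the parts `e ∩ (x i, x (i+1))` are pairwise disjoint over `e ∈ H` (equivalently, for
distinct `e, f ∈ H` all elements of one part precede all elements of the other part). -/
def IsIntervalWisePartite (lam : List ℕ) (H : Finset (Finset ℤ)) : Prop :=
  ∃ x : Fin (lam.length + 1) → ℝ, StrictMono x ∧ (∀ i, ∀ z : ℤ, (z : ℝ) ≠ x i) ∧
    (∀ e ∈ H, ∀ i : Fin lam.length,
      {z : ℤ | z ∈ e ∧ x i.castSucc < (z : ℝ) ∧ (z : ℝ) < x i.succ}.ncard = lam.get i) ∧
    ∀ i : Fin lam.length, ∀ e ∈ H, ∀ f ∈ H, e ≠ f →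
      (∀ a ∈ e, ∀ b ∈ f,
        (x i.castSucc < (a : ℝ) ∧ (a : ℝ) < x i.succ) →
        (x i.castSucc < (b : ℝ) ∧ (b : ℝ) < x i.succ) → a < b) ∨
      (∀ a ∈ e, ∀ b ∈ f,
        (x i.castSucc < (a : ℝ) ∧ (a : ℝ) < x i.succ) →
        (x i.castSucc < (b : ℝ) ∧ (b : ℝ) < x i.succ) → b < a)

open Finset
open scoped Classical

namespace SimpleGraph

variable {α : Type*} (G : SimpleGraph α)

def DegenerateOn (H : Finset α) (d : ℕ) : Prop :=
  ∀ S ⊆ H, S.Nonempty → ∃ e ∈ S, #{f ∈ S | G.Adj e f} ≤ d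

variable {G} {H S : Finset α} {d : ℕ}

lemma DegenerateOn.mono (h : G.DegenerateOn H d) (hS : S ⊆ H) : G.DegenerateOn S d :=
  fun T hT => h T (hT.trans hS)

lemma sum_card_adj_eq_sum_card_adj_erase_add {e : α} (he : e ∈ H) :
    ∑ f ∈ H, #{g ∈ H | G.Adj f g} =
      ∑ f ∈ H.erase e, #{g ∈ H.erase e | G.Adj f g} + 2 * #{f ∈ H | G.Adj e f} := by
  have hsymm : ∑ f ∈ H.erase e, (if G.Adj f e then 1 else 0) = #{f ∈ H | G.Adj e f} := by
    rw [card_filter, ← add_sum_erase H _ he]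
    simp [G.adj_comm]
  simp only [card_filter]
  rw [← add_sum_erase H _ he,
    sum_congr rfl fun f _ => (add_sum_erase H (fun g => if G.Adj f g then 1 else 0) he).symm,
    sum_add_distrib, hsymm, card_filter]
  ring

lemma DegenerateOn.sum_card_adj_le (h : G.DegenerateOn H d) :
    ∑ e ∈ H, #{f ∈ H | G.Adj e f} ≤ 2 * d * #H := by
  induction H using Finset.strongInduction with
  | H H ih =>
  rcases H.eq_empty_or_nonempty with rfl | hne
  · simp
  obtain ⟨e, he, hdeg⟩ := h H subset_rfl hne
  have hrest := ih (H.erase e) (erase_ssubset he) (h.mono (erase_subset e H))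
  rw [sum_card_adj_eq_sum_card_adj_erase_add he, ← card_erase_add_one he]
  linarith

lemma DegenerateOn.exists_isIndepSet (h : G.DegenerateOn H d) :
    ∃ T ⊆ H, G.IsIndepSet T ∧ #H ≤ (d + 1) * #T := by
  induction H using Finset.strongInduction with
  | H H ih =>
  rcases H.eq_empty_or_nonempty with rfl | hne
  · exact ⟨∅, subset_rfl, by simp, by simp⟩
  obtain ⟨e, he, hdeg⟩ := h H subset_rfl hne
  set N := {f ∈ H | G.Adj e f}
  have hsub : H.erase e \ N ⊆ H := sdiff_subset.trans (erase_subset e H)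
  obtain ⟨T, hT, hind, hcard⟩ :=
    ih _ (sdiff_subset.trans_ssubset (erase_ssubset he)) (h.mono hsub)
  have hnadj : ∀ f ∈ T, ¬G.Adj e f := fun f hf hef =>
    (mem_sdiff.1 (hT hf)).2 (mem_filter.2 ⟨hsub (hT hf), hef⟩)
  have heT : e ∉ T := fun heT => notMem_erase e H (mem_sdiff.1 (hT heT)).1
  refine ⟨insert e T, insert_subset he (hT.trans hsub), ?_, ?_⟩
  · rw [coe_insert, isIndepSet_iff, Set.pairwise_insert]
    exact ⟨hind, fun f hf _ => ⟨hnadj f hf, fun hfe => hnadj f hf hfe.symm⟩⟩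
  · have := card_le_card_sdiff_add_card (s := H.erase e) (t := N)
    rw [card_insert_of_notMem heT, ← card_erase_add_one he]
    nlinarith

lemma degenerateOn_iSup {ι : Type*} [Fintype ι] {G : ι → SimpleGraph α} {d : ι → ℕ}
    (h : ∀ i, (G i).DegenerateOn H (d i)) : (⨆ i, G i).DegenerateOn H (∑ i, 2 * d i) := by
  intro S hS hne
  apply exists_le_of_sum_le hne
  calc ∑ e ∈ S, #{f ∈ S | (⨆ i, G i).Adj e f}
      ≤ ∑ e ∈ S, ∑ i, #{f ∈ S | (G i).Adj e f} := by
        refine sum_le_sum fun e _ => (card_le_card fun f hf => ?_).trans card_biUnion_le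
        obtain ⟨hfS, i, hi⟩ := by simpa only [mem_filter, iSup_adj] using hf
        exact mem_biUnion.2 ⟨i, mem_univ i, mem_filter.2 ⟨hfS, hi⟩⟩
    _ = ∑ i, ∑ e ∈ S, #{f ∈ S | (G i).Adj e f} := sum_comm
    _ ≤ ∑ i, 2 * d i * #S := sum_le_sum fun i _ => ((h i).mono hS).sum_card_adj_le
    _ = ∑ _e ∈ S, ∑ i, 2 * d i := by rw [sum_const, ← sum_mul, smul_eq_mul, mul_comm]

end SimpleGraph

section Interleave

variable {s t : Finset ℤ}

def Straddles (s : Finset ℤ) (L : ℤ) : Prop :=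
  (∃ a ∈ s, a ≤ L) ∧ ∃ b ∈ s, L < b

def Interleave (s t : Finset ℤ) : Prop :=
  (∃ a ∈ s, ∃ b ∈ t, b < a) ∧ ∃ a ∈ s, ∃ b ∈ t, a < b

lemma Interleave.symm (h : Interleave s t) : Interleave t s :=
  let ⟨⟨a, ha, b, hb, hba⟩, a', ha', b', hb', hab⟩ := h
  ⟨⟨b', hb', a', ha', hab⟩, b, hb, a, ha, hba⟩

lemma Interleave.two_le_card (h : Interleave s t) (hst : #s = #t) : 2 ≤ #s := by
  obtain ⟨⟨a, ha, b, hb, hba⟩, a', ha', b', hb', hab⟩ := h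
  by_contra! hlt
  have haa' : a = a' := card_le_one.1 (by omega) a ha a' ha'
  have hbb' : 1 < #t := one_lt_card.2 ⟨b, hb, b', hb', by omega⟩
  omega

lemma Interleave.straddles_min' (h : Interleave s t) (hst : #s = #t) (hs : s.Nonempty)
    (hmin : t.min ≤ s.min) : Straddles s (s.min' hs) ∧ Straddles t (s.min' hs) := by
  obtain ⟨c, hc, hcne⟩ := exists_mem_ne (h.two_le_card hst) (s.min' hs)
  obtain ⟨⟨-, -, b, hb, -⟩, a, ha, b', hb', hab⟩ := h
  have ht : t.Nonempty := ⟨b, hb⟩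
  have htmin : t.min' ht ≤ s.min' hs := by
    rw [← WithTop.coe_le_coe, coe_min', coe_min']
    exact hmin
  exact ⟨⟨⟨_, min'_mem s hs, le_rfl⟩, c, hc, (min'_le s c hc).lt_of_ne' hcne⟩,
    ⟨_, min'_mem t ht, htmin⟩, b', hb', (min'_le s a ha).trans_lt hab⟩

lemma lt_or_gt_of_not_interleave (hd : Disjoint s t) (h : ¬Interleave s t) :
    (∀ a ∈ s, ∀ b ∈ t, a < b) ∨ ∀ a ∈ s, ∀ b ∈ t, b < a := by
  have hne : ∀ a ∈ s, ∀ b ∈ t, a ≠ b := fun a ha b hb hab =>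
    disjoint_left.1 hd ha (hab ▸ hb)
  by_cases hgt : ∃ a ∈ s, ∃ b ∈ t, b < a
  · have hle : ∀ a ∈ s, ∀ b ∈ t, b ≤ a := by
      simpa only [Interleave, hgt, true_and, not_exists, not_and, not_lt] using h
    exact Or.inr fun a ha b hb => (hle a ha b hb).lt_of_ne' (hne a ha b hb)
  · simp only [not_exists, not_and, not_lt] at hgt
    exact Or.inl fun a ha b hb => (hgt a ha b hb).lt_of_ne (hne a ha b hb)

end Interleave

section InterleaveGraph

variable {α : Type*} {P : α → Finset ℤ}

def interleaveGraph (P : α → Finset ℤ) : SimpleGraph α :=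
  SimpleGraph.fromRel fun e f => Interleave (P e) (P f)

lemma interleaveGraph_adj {e f : α} :
    (interleaveGraph P).Adj e f ↔ e ≠ f ∧ Interleave (P e) (P f) := by
  simp only [interleaveGraph, SimpleGraph.fromRel_adj]
  exact and_congr_right fun _ => ⟨fun h => h.elim id Interleave.symm, Or.inl⟩

lemma degenerateOn_interleaveGraph {H : Finset α} {c m : ℕ} (hc : ∀ e ∈ H, #(P e) = c)
    (hm : ∀ L, #{e ∈ H | Straddles (P e) L} ≤ m) :
    (interleaveGraph P).DegenerateOn H (m - 1) := by
  intro S hS hne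
  obtain ⟨e, he, hmax⟩ := S.exists_max_image (fun e => (P e).min) hne
  refine ⟨e, he, ?_⟩
  set N := {f ∈ S | (interleaveGraph P).Adj e f}
  rcases N.eq_empty_or_nonempty with hN | ⟨f₀, hf₀⟩
  · simp [hN]
  have hPe : (P e).Nonempty := by
    obtain ⟨-, ⟨a, ha, -⟩, -⟩ := interleaveGraph_adj.1 (mem_filter.1 hf₀).2
    exact ⟨a, ha⟩
  have hstraddle : ∀ f ∈ N, Straddles (P e) ((P e).min' hPe) ∧ Straddles (P f) ((P e).min' hPe) :=
    fun f hf => by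
      obtain ⟨hfS, -, hI⟩ := by simpa only [N, mem_filter, interleaveGraph_adj] using hf
      exact hI.straddles_min' ((hc e (hS he)).trans (hc f (hS hfS)).symm) hPe (hmax f hfS)
  have hsub : insert e N ⊆ {g ∈ H | Straddles (P g) ((P e).min' hPe)} := by
    intro g hg
    rcases mem_insert.1 hg with rfl | hgN
    · exact mem_filter.2 ⟨hS he, (hstraddle f₀ hf₀).1⟩
    · exact mem_filter.2 ⟨hS (mem_filter.1 hgN).1, (hstraddle g hgN).2⟩
  have heN : e ∉ N := fun h => (mem_filter.1 h).2.ne rfl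
  have := (card_le_card hsub).trans (hm _)
  rw [card_insert_of_notMem heN] at this
  omega

end InterleaveGraph

section Cut

noncomputable def window (X : ℕ → ℝ) (k : ℕ) (e : Finset ℤ) : Finset ℤ :=
  {z ∈ e | X k < z ∧ z < X (k + 1)}

/-- `IsLamPartite` with the cut points indexed by `ℕ` rather than by `Fin (lam.length + 1)`, so
that a cut point can be inserted without changing types. -/
structure IsCut (lam : List ℕ) (H : Finset (Finset ℤ)) (X : ℕ → ℝ) : Prop where
  lt_succ : ∀ k < lam.length, X k < X (k + 1)
  ne_intCast : ∀ k ≤ lam.length, ∀ z : ℤ, (z : ℝ) ≠ X k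
  card_window : ∀ e ∈ H, ∀ k (hk : k < lam.length), #(window X k e) = lam[k]

variable {lam : List ℕ} {H : Finset (Finset ℤ)} {X : ℕ → ℝ}

lemma ncard_setOf_mem_eq_card_window (X : ℕ → ℝ) (k : ℕ) (e : Finset ℤ) :
    {z : ℤ | z ∈ e ∧ X k < z ∧ z < X (k + 1)}.ncard = #(window X k e) := by
  rw [window, ← coe_filter, Set.ncard_coe_finset]

lemma IsLamPartite.exists_isCut (h : IsLamPartite lam H) : ∃ X, IsCut lam H X := by
  obtain ⟨x, hmono, hint, hcount⟩ := h
  refine ⟨fun k => if hk : k < lam.length + 1 then x ⟨k, hk⟩ else 0, ⟨?_, ?_, ?_⟩⟩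
  · intro k hk
    simpa [hk, Nat.lt_succ_of_lt hk] using hmono (Fin.castSucc_lt_succ (i := ⟨k, hk⟩))
  · intro k hk z
    simpa [Nat.lt_succ_of_le hk] using hint ⟨k, Nat.lt_succ_of_le hk⟩ z
  · intro e he k hk
    have := hcount e he ⟨k, hk⟩
    rw [← ncard_setOf_mem_eq_card_window]
    simpa [hk, Nat.lt_succ_of_lt hk] using this

lemma IsCut.mono {H' : Finset (Finset ℤ)} (hX : IsCut lam H X) (hH : H' ⊆ H) :
    IsCut lam H' X :=
  ⟨hX.lt_succ, hX.ne_intCast, fun e he => hX.card_window e (hH he)⟩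

lemma IsCut.strictMono (hX : IsCut lam H X) :
    StrictMono fun j : Fin (lam.length + 1) => X j :=
  Fin.strictMono_iff_lt_succ.2 fun j => hX.lt_succ j j.2

lemma IsCut.ncard_eq_get (hX : IsCut lam H X) {e : Finset ℤ} (he : e ∈ H) (i : Fin lam.length) :
    {z : ℤ | z ∈ e ∧ X i.castSucc < z ∧ z < X i.succ}.ncard = lam.get i := by
  simpa [← ncard_setOf_mem_eq_card_window] using hX.card_window e he i i.2

lemma IsCut.isLamPartite (hX : IsCut lam H X) : IsLamPartite lam H :=
  ⟨fun j => X j, hX.strictMono, fun j => hX.ne_intCast j (Nat.lt_succ_iff.1 j.2),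
    fun _ he => hX.ncard_eq_get he⟩

lemma IsCut.isIntervalWisePartite (hX : IsCut lam H X)
    (hdisj : (H : Set (Finset ℤ)).Pairwise Disjoint)
    (hI : ∀ k < lam.length, ∀ e ∈ H, ∀ f ∈ H, e ≠ f → ¬Interleave (window X k e) (window X k f)) :
    IsIntervalWisePartite lam H := by
  refine ⟨fun j => X j, hX.strictMono, fun j => hX.ne_intCast j (Nat.lt_succ_iff.1 j.2),
    fun _ he => hX.ncard_eq_get he, fun i e he f hf hef => ?_⟩
  have hd : Disjoint (window X i e) (window X i f) :=
    (hdisj he hf hef).mono (filter_subset _ _) (filter_subset _ _)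
  rcases lt_or_gt_of_not_interleave hd (hI i i.2 e he f hf hef) with h | h
  · exact Or.inl fun a ha b hb hra hrb => h a (mem_filter.2 ⟨ha, hra⟩) b (mem_filter.2 ⟨hb, hrb⟩)
  · exact Or.inr fun a ha b hb hra hrb => h a (mem_filter.2 ⟨ha, hra⟩) b (mem_filter.2 ⟨hb, hrb⟩)

end Cut

section Split

variable {lam : List ℕ} {i j a b : ℕ}

def splitAt (lam : List ℕ) (i a b : ℕ) : List ℕ :=
  lam.take i ++ a :: b :: lam.drop (i + 1)

lemma take_append_getElem_cons_drop (hi : i < lam.length) :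
    lam.take i ++ lam[i] :: lam.drop (i + 1) = lam := by
  rw [← List.drop_eq_getElem_cons hi, List.take_append_drop]

lemma length_splitAt (hi : i < lam.length) : (splitAt lam i a b).length = lam.length + 1 := by
  simp [splitAt]
  omega

lemma getElem_splitAt_of_lt (hi : i < lam.length) (hj : j < i) :
    (splitAt lam i a b)[j]'(by rw [length_splitAt hi]; omega) = lam[j] := by
  simp only [splitAt]
  rw [List.getElem_append_left (by simp; omega), List.getElem_take]

lemma getElem_splitAt_self (hi : i < lam.length) :
    (splitAt lam i a b)[i]'(by rw [length_splitAt hi]; omega) = a := by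
  simp [splitAt, List.getElem_append_right, min_eq_left hi.le]

lemma getElem_splitAt_succ (hi : i < lam.length) :
    (splitAt lam i a b)[i + 1]'(by rw [length_splitAt hi]; omega) = b := by
  simp [splitAt, List.getElem_append_right, min_eq_left hi.le]

lemma getElem_splitAt_of_gt (hi : i < lam.length) (hj : i + 1 < j) (hj' : j < lam.length + 1) :
    (splitAt lam i a b)[j]'(by rw [length_splitAt hi]; omega) = lam[j - 1] := by
  simp only [splitAt]
  rw [List.getElem_append_right (by simp; omega)]
  obtain ⟨k, rfl⟩ : ∃ k, j = i + 2 + k := ⟨j - (i + 2), by omega⟩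
  have hk : i + 2 + k - (lam.take i).length = k + 2 := by simp; omega
  simp only [hk, List.getElem_cons_succ, List.getElem_drop]
  congr 1
  omega

lemma sum_splitAt (hi : i < lam.length) (hab : a + b = lam[i]) :
    (splitAt lam i a b).sum = lam.sum := by
  conv_rhs => rw [← take_append_getElem_cons_drop hi]
  simp [splitAt, ← hab, add_assoc]

lemma refines_splitAt (hi : i < lam.length) (hab : a + b = lam[i]) :
    Refines lam (splitAt lam i a b) := by
  refine ⟨(lam.take i).map ([·]) ++ [a, b] :: (lam.drop (i + 1)).map ([·]), ?_, ?_, ?_⟩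
  · simp only [List.flatten_append, List.flatten_cons, ← List.flatMap_def,
      List.flatMap_singleton', splitAt]
    rfl
  · conv_rhs => rw [← take_append_getElem_cons_drop hi]
    simp [Function.comp_def, hab]
  · simp only [List.mem_append, List.mem_map, List.mem_cons]
    rintro g (⟨k, -, rfl⟩ | rfl | ⟨k, -, rfl⟩) <;> simp

lemma IsOrderedPartition.splitAt {r : ℕ} (h : IsOrderedPartition r lam) (hi : i < lam.length)
    (ha : 0 < a) (hb : 0 < b) (hab : a + b = lam[i]) :
    IsOrderedPartition r (splitAt lam i a b) := by
  refine ⟨(sum_splitAt hi hab).trans h.1, fun k hk => ?_⟩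
  simp only [_root_.splitAt, List.mem_append, List.mem_cons] at hk
  rcases hk with hk | rfl | rfl | hk
  · exact h.2 k (List.mem_of_mem_take hk)
  · exact ha
  · exact hb
  · exact h.2 k (List.mem_of_mem_drop hk)

lemma splitAt_ne_of_lt {i i' a a' b b' : ℕ} (hi' : i' < lam.length) (hii' : i < i')
    (ha : a < lam[i]) : splitAt lam i a b ≠ splitAt lam i' a' b' := by
  intro h
  have := List.getElem_of_eq h (i := i) (by rw [length_splitAt (hii'.trans hi')]; omega)
  rw [getElem_splitAt_self (hii'.trans hi'), getElem_splitAt_of_lt hi' hii'] at this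
  omega

lemma splitAt_inj {i i' a a' : ℕ} (hi : i < lam.length) (hi' : i' < lam.length)
    (ha : a < lam[i]) (ha' : a' < lam[i'])
    (h : splitAt lam i a (lam[i] - a) = splitAt lam i' a' (lam[i'] - a')) : i = i' ∧ a = a' := by
  rcases lt_trichotomy i i' with hii' | rfl | hi'i
  · exact absurd h (splitAt_ne_of_lt hi' hii' ha)
  · have := List.getElem_of_eq h (i := i) (by rw [length_splitAt hi]; omega)
    rw [getElem_splitAt_self hi, getElem_splitAt_self hi] at this
    exact ⟨rfl, this⟩
  · exact absurd h.symm (splitAt_ne_of_lt hi hi'i ha')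

lemma sum_sum_splitAt_le (M : List ℕ → ℕ) {R : Finset (List ℕ)}
    (hR : ∀ i : Fin lam.length, ∀ a ∈ Ico 1 lam[i], splitAt lam i a (lam[i] - a) ∈ R) :
    ∑ i : Fin lam.length, ∑ a ∈ Ico 1 lam[i], M (splitAt lam i a (lam[i] - a)) ≤
      ∑ l ∈ R, M l := by
  set g : (Σ _ : Fin lam.length, ℕ) → List ℕ := fun p => splitAt lam p.1 p.2 (lam[p.1] - p.2)
  have hg : Set.InjOn g (univ.sigma fun i : Fin lam.length => Ico 1 lam[i]) := by
    rintro ⟨i, a⟩ hia ⟨i', a'⟩ hia' h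
    simp only [coe_sigma, coe_univ, Set.mem_sigma_iff, Set.mem_univ, coe_Ico, Set.mem_Ico,
      true_and] at hia hia'
    obtain ⟨hii', rfl⟩ := splitAt_inj i.2 i'.2 hia.2 hia'.2 h
    rw [Fin.ext hii']
  have hsigma : ∑ i : Fin lam.length, ∑ a ∈ Ico 1 lam[i], M (splitAt lam i a (lam[i] - a)) =
      ∑ p ∈ univ.sigma fun i : Fin lam.length => Ico 1 lam[i], M (g p) := by
    rw [sum_sigma]
  rw [hsigma, ← sum_image (g := g) hg]
  refine sum_le_sum_of_subset fun l hl => ?_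
  obtain ⟨⟨i, a⟩, hia, rfl⟩ := mem_image.1 hl
  exact hR i a (mem_sigma.1 hia).2

lemma exists_two_le_getElem_of_length_lt_sum (h : lam.length < lam.sum) :
    ∃ i : Fin lam.length, 2 ≤ lam[i] := by
  by_contra! hle
  have : lam.sum ≤ lam.length := by
    simpa using List.sum_le_card_nsmul lam 1 fun k hk => by
      obtain ⟨i, hi, rfl⟩ := List.getElem_of_mem hk
      exact Nat.le_of_lt_succ (hle ⟨i, hi⟩)
  omega

end Split

section Insert

variable {lam : List ℕ} {H : Finset (Finset ℤ)} {X : ℕ → ℝ} {i k : ℕ} {y : ℝ}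

def insertCut (X : ℕ → ℝ) (i : ℕ) (y : ℝ) (k : ℕ) : ℝ :=
  if k ≤ i then X k else if k = i + 1 then y else X (k - 1)

lemma insertCut_of_le (hk : k ≤ i) : insertCut X i y k = X k := if_pos hk

lemma insertCut_succ : insertCut X i y (i + 1) = y := by simp [insertCut]

lemma insertCut_of_gt (hk : i + 1 < k) : insertCut X i y k = X (k - 1) := by
  rw [insertCut, if_neg (by omega), if_neg (by omega)]

lemma window_insertCut_of_lt (e : Finset ℤ) (hk : k < i) :
    window (insertCut X i y) k e = window X k e := by
  simp only [window, insertCut_of_le hk.le, insertCut_of_le hk]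

lemma window_insertCut_self (e : Finset ℤ) (hyX : y < X (i + 1)) :
    window (insertCut X i y) i e = (window X i e).filter fun z : ℤ => (z : ℝ) < y := by
  ext z
  simp only [window, mem_filter, insertCut_of_le le_rfl, insertCut_succ]
  exact ⟨fun ⟨hz, h₁, h₂⟩ => ⟨⟨hz, h₁, h₂.trans hyX⟩, h₂⟩, fun ⟨⟨hz, h₁, _⟩, h₂⟩ => ⟨hz, h₁, h₂⟩⟩

lemma window_insertCut_succ (e : Finset ℤ) (hXy : X i < y) (hy : ∀ z : ℤ, (z : ℝ) ≠ y) :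
    window (insertCut X i y) (i + 1) e = (window X i e).filter fun z : ℤ => ¬(z : ℝ) < y := by
  ext z
  simp only [window, mem_filter, insertCut_succ, insertCut_of_gt (Nat.lt_succ_self (i + 1)),
    not_lt, (hy z).symm.le_iff_lt]
  exact ⟨fun ⟨hz, h₁, h₂⟩ => ⟨⟨hz, hXy.trans h₁, h₂⟩, h₁⟩, fun ⟨⟨hz, _, h₂⟩, h₁⟩ => ⟨hz, h₁, h₂⟩⟩

lemma window_insertCut_of_gt (e : Finset ℤ) (hk : i + 1 < k) :
    window (insertCut X i y) k e = window X (k - 1) e := by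
  simp only [window, insertCut_of_gt hk, insertCut_of_gt (by omega : i + 1 < k + 1),
    Nat.add_sub_cancel, Nat.sub_add_cancel (by omega : 1 ≤ k)]

lemma IsCut.splitAt_insertCut (hX : IsCut lam H X) {a : ℕ} (hi : i < lam.length) (hXy : X i < y)
    (hyX : y < X (i + 1)) (hy : ∀ z : ℤ, (z : ℝ) ≠ y)
    (ha : ∀ e ∈ H, #((window X i e).filter fun z : ℤ => (z : ℝ) < y) = a) :
    IsCut (splitAt lam i a (lam[i] - a)) H (insertCut X i y) where
  lt_succ k hk := by
    rw [length_splitAt hi] at hk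
    rcases lt_trichotomy k i with hki | rfl | hik
    · rw [insertCut_of_le hki.le, insertCut_of_le hki]
      exact hX.lt_succ k (by omega)
    · rw [insertCut_of_le le_rfl, insertCut_succ]
      exact hXy
    · rcases (Nat.succ_le_of_lt hik).eq_or_lt with rfl | hik'
      · rw [insertCut_succ, insertCut_of_gt (by omega)]
        exact hyX
      · rw [insertCut_of_gt hik', insertCut_of_gt (by omega), Nat.add_sub_cancel]
        simpa [Nat.sub_add_cancel (by omega : 1 ≤ k)] using hX.lt_succ (k - 1) (by omega)
  ne_intCast k hk z := by
    rw [length_splitAt hi] at hk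
    unfold insertCut
    split_ifs
    · exact hX.ne_intCast k (by omega) z
    · exact hy z
    · exact hX.ne_intCast (k - 1) (by omega) z
  card_window e he k hk := by
    rw [length_splitAt hi] at hk
    rcases lt_trichotomy k i with hki | rfl | hik
    · rw [window_insertCut_of_lt e hki, getElem_splitAt_of_lt hi hki]
      exact hX.card_window e he k (by omega)
    · rw [window_insertCut_self e hyX, getElem_splitAt_self hi, ha e he]
    rcases (Nat.succ_le_of_lt hik).eq_or_lt with rfl | hik'
    · have := card_filter_add_card_filter_not (s := window X i e) fun z : ℤ => (z : ℝ) < y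
      rw [window_insertCut_succ e hXy hy, getElem_splitAt_succ hi, ← hX.card_window e he i hi,
        ← ha e he]
      omega
    · rw [window_insertCut_of_gt e hik', getElem_splitAt_of_gt hi hik' hk]
      exact hX.card_window e he (k - 1) (by omega)

end Insert

lemma intCast_lt_add_half_iff {z L : ℤ} : (z : ℝ) < L + 1 / 2 ↔ z ≤ L := by
  constructor
  · intro h
    by_contra! hLz
    have : (L + 1 : ℝ) ≤ z := by exact_mod_cast hLz
    linarith
  · intro h
    have : (z : ℝ) ≤ L := by exact_mod_cast h
    linarith

lemma intCast_ne_add_half (z L : ℤ) : (z : ℝ) ≠ L + 1 / 2 := by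
  intro h
  have : ((2 * z : ℤ) : ℝ) = (2 * L + 1 : ℤ) := by push_cast; linarith
  have := Int.cast_injective this
  omega

section Dichotomy

variable {lam : List ℕ} {H : Finset (Finset ℤ)} {X : ℕ → ℝ}

lemma IsCut.exists_splitAt_of_sum_lt_card_straddles (hX : IsCut lam H X) {i : ℕ}
    (hi : i < lam.length) (w : ℕ → ℕ) {L : ℤ}
    (hL : ∑ a ∈ Ico 1 lam[i], w a < #{e ∈ H | Straddles (window X i e) L}) :
    ∃ a ∈ Ico 1 lam[i], ∃ H' ⊆ H, IsLamPartite (splitAt lam i a (lam[i] - a)) H' ∧ w a < #H' := by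
  set S := {e ∈ H | Straddles (window X i e) L}
  set below : Finset ℤ → ℕ := fun e => #{z ∈ window X i e | z ≤ L}
  have hmaps : ∀ e ∈ S, below e ∈ Ico 1 lam[i] := by
    intro e he
    obtain ⟨heH, ⟨b, hb, hbL⟩, c, hc, hLc⟩ := mem_filter.1 he
    rw [mem_Ico, ← hX.card_window e heH i hi]
    exact ⟨card_pos.2 ⟨b, mem_filter.2 ⟨hb, hbL⟩⟩,
      card_lt_card (filter_ssubset.2 ⟨c, hc, not_le.2 hLc⟩)⟩
  obtain ⟨a, ha, hlt⟩ := exists_lt_of_sum_lt (hL.trans_eq (card_eq_sum_card_fiberwise hmaps))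
  set H' := {e ∈ S | below e = a}
  obtain ⟨e₀, he₀⟩ : H'.Nonempty := card_pos.1 (by omega)
  obtain ⟨⟨b, hb, hbL⟩, c, hc, hLc⟩ := (mem_filter.1 (mem_filter.1 he₀).1).2
  have hXb : X i < b := (mem_filter.1 hb).2.1
  have hcX : (c : ℝ) < X (i + 1) := (mem_filter.1 hc).2.2
  have hbL' : (b : ℝ) ≤ L := by exact_mod_cast hbL
  have hLc' : (L + 1 : ℝ) ≤ c := by exact_mod_cast hLc
  have hH' : H' ⊆ H := (filter_subset _ _).trans (filter_subset _ _)
  refine ⟨a, ha, H', hH', ((hX.mono hH').splitAt_insertCut hi (y := L + 1 / 2) (by linarith)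
    (by linarith) (fun z => intCast_ne_add_half z L) fun e he => ?_).isLamPartite, hlt⟩
  simp only [intCast_lt_add_half_iff]
  exact (mem_filter.1 he).2

lemma IsCut.exists_isIntervalWisePartite (hX : IsCut lam H X)
    (hdisj : (H : Set (Finset ℤ)).Pairwise Disjoint) (m : Fin lam.length → ℕ)
    (hm : ∀ i : Fin lam.length, ∀ L, #{e ∈ H | Straddles (window X i e) L} ≤ m i) :
    ∃ Hs ⊆ H, IsIntervalWisePartite lam Hs ∧ #H ≤ (∑ i, 2 * (m i - 1) + 1) * #Hs := by
  have hdeg := SimpleGraph.degenerateOn_iSup fun i : Fin lam.length =>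
    degenerateOn_interleaveGraph (fun e he => hX.card_window e he i i.2) (hm i)
  obtain ⟨Hs, hHs, hind, hcard⟩ := hdeg.exists_isIndepSet
  refine ⟨Hs, hHs, (hX.mono hHs).isIntervalWisePartite (hdisj.mono hHs) ?_, hcard⟩
  intro k hk e he f hf hef hI
  exact hind he hf hef (SimpleGraph.iSup_adj.2 ⟨⟨k, hk⟩, interleaveGraph_adj.2 ⟨hef, hI⟩⟩)

end Dichotomy

lemma sum_two_mul_sub_one_add_one_le {ι : Type*} {s : Finset ι} {f : ι → ℕ} {i : ι} (hi : i ∈ s)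
    (hfi : 0 < f i) : ∑ j ∈ s, 2 * (f j - 1) + 1 ≤ 2 * ∑ j ∈ s, f j := by
  suffices ∑ j ∈ s, (f j - 1) + 1 ≤ ∑ j ∈ s, f j by rw [← mul_sum]; omega
  rw [← add_sum_erase s _ hi, ← add_sum_erase s _ hi]
  have := sum_le_sum fun j (_ : j ∈ s.erase i) => Nat.sub_le (f j) 1
  omega

theorem partite_dichotomy_general (r : ℕ) (lam : List ℕ) (hlam : IsOrderedPartition r lam)
    (hs : lam.length < r)
    (R : Finset (List ℕ))
    (hR : ∀ l : List ℕ, l ∈ R ↔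
      (IsOrderedPartition r l ∧ l.length = lam.length + 1 ∧ Refines lam l))
    (M : List ℕ → ℕ) (hM : ∀ l ∈ R, 0 < M l)
    (H : Finset (Finset ℤ))
    (hdisj : ∀ e ∈ H, ∀ f ∈ H, e ≠ f → Disjoint e f)
    (hpart : IsLamPartite lam H) :
    (∃ Hs ⊆ H, IsIntervalWisePartite lam Hs ∧ H.card ≤ 2 * (∑ l ∈ R, M l) * Hs.card) ∨
    (∃ l ∈ R, ∃ H' ⊆ H, IsLamPartite l H' ∧ M l < H'.card) := by
  obtain ⟨X, hX⟩ := hpart.exists_isCut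
  have hsplit : ∀ i : Fin lam.length, ∀ a ∈ Ico 1 lam[i], splitAt lam i a (lam[i] - a) ∈ R := by
    intro i a ha
    rw [mem_Ico] at ha
    have hsum : a + (lam[i] - a) = lam[i] := by omega
    exact (hR _).2 ⟨hlam.splitAt i.2 (by omega) (by omega) hsum, length_splitAt i.2,
      refines_splitAt i.2 hsum⟩
  set m : Fin lam.length → ℕ := fun i => ∑ a ∈ Ico 1 lam[i], M (splitAt lam i a (lam[i] - a))
  by_cases hA : ∃ i : Fin lam.length, ∃ L, m i < #{e ∈ H | Straddles (window X i e) L}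
  · obtain ⟨i, L, hL⟩ := hA
    obtain ⟨a, ha, H', hH', hpart', hlt⟩ :=
      hX.exists_splitAt_of_sum_lt_card_straddles i.2 (fun a => M (splitAt lam i a (lam[i] - a))) hL
    exact Or.inr ⟨_, hsplit i a ha, H', hH', hpart', hlt⟩
  simp only [not_exists, not_lt] at hA
  obtain ⟨Hs, hHs, hiw, hcard⟩ :=
    hX.exists_isIntervalWisePartite (fun e he f hf => hdisj e he f hf) m hA
  obtain ⟨i₀, hi₀⟩ := exists_two_le_getElem_of_length_lt_sum (hlam.1 ▸ hs)
  have hm₀ : 0 < m i₀ := (hM _ (hsplit i₀ 1 (mem_Ico.2 ⟨le_rfl, hi₀⟩))).trans_le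
    (single_le_sum (f := fun a => M (splitAt lam i₀ a (lam[i₀] - a))) (fun _ _ => Nat.zero_le _)
      (mem_Ico.2 ⟨le_rfl, hi₀⟩))
  refine Or.inl ⟨Hs, hHs, hiw, hcard.trans (Nat.mul_le_mul_right _ ?_)⟩
  calc ∑ i, 2 * (m i - 1) + 1 ≤ 2 * ∑ i, m i := sum_two_mul_sub_one_add_one_le (mem_univ i₀) hm₀
    _ ≤ 2 * ∑ l ∈ R, M l := Nat.mul_le_mul_left 2 (sum_sum_splitAt_le M hsplit)

/-- **Structural dichotomy.** If `H` is `lam`-partite, where `lam` has fewer than `r` parts,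
and `R` is the set of ordered partitions of `r` into one more part refining `lam`, with weights
`M l` summing to `M`, then either `H` has an interval-wise `lam`-partite sub-collection of size
at least `|H| / (2M)`, or it has a `l`-partite sub-collection of size more than `M l` for some
`l ∈ R`. -/
theorem partite_dichotomy (r : ℕ) (lam : List ℕ) (hlam : IsOrderedPartition r lam)
    (hs : lam.length < r)
    (R : Finset (List ℕ))
    (hR : ∀ l : List ℕ, l ∈ R ↔
      (IsOrderedPartition r l ∧ l.length = lam.length + 1 ∧ Refines lam l))
    (M : List ℕ → ℕ) (hM : ∀ l ∈ R, 0 < M l)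
    (H : Finset (Finset ℤ))
    (hcard : ∀ e ∈ H, e.card = r)
    (hdisj : ∀ e ∈ H, ∀ f ∈ H, e ≠ f → Disjoint e f)
    (hpart : IsLamPartite lam H) :
    (∃ Hs ⊆ H, IsIntervalWisePartite lam Hs ∧ H.card ≤ 2 * (∑ l ∈ R, M l) * Hs.card) ∨
    (∃ l ∈ R, ∃ H' ⊆ H, IsLamPartite l H' ∧ M l < H'.card) :=
  partite_dichotomy_general r lam hlam hs R hR M hM H hdisj hpart
end

section
/- For ordered r-uniform hypergraph matchings H and H_r with H_r being r-partite, and for every r-pattern P, the size of the largest P-clique in the blow-up H[H_r] is at most L_P(H)·L_P(H_r), where L_P denotes the size of the largest P-clique. -/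
/-- `H` is `r`-partite: for every two edges `e, f` (possibly equal), the `i`-th smallest
vertex of `e` precedes the `(i+1)`-th smallest vertex of `f`. -/
def RPartite (H : Finset (Finset ℤ)) : Prop :=
  ∀ e ∈ H, ∀ f ∈ H, ∀ i : ℕ,
    ∀ hie : i < (e.sort (· ≤ ·)).length, ∀ hif : i + 1 < (f.sort (· ≤ ·)).length,
      (e.sort (· ≤ ·)).get ⟨i, hie⟩ < (f.sort (· ≤ ·)).get ⟨i + 1, hif⟩

/-- The edge of the blow-up obtained from the edge `e` of `H` and the edge `f` of `Hr`:
its `i`-th smallest element is `N·eᵢ + fᵢ`, where `e₁ < … < eᵣ` and `f₁ < … < fᵣ` are the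
elements of `e` and `f`. -/
def combineEdge (N : ℤ) (e f : Finset ℤ) : Finset ℤ :=
  (List.zipWith (fun a b => N * a + b) (e.sort (· ≤ ·)) (f.sort (· ≤ ·))).toFinset

/-- The blow-up `H[Hr]`: each vertex of `H` is replaced by `N` consecutive positions, and a
copy of `Hr` (whose vertices lie in `{0, …, N-1}`) is placed inside every edge of `H`. -/
def blowup (N : ℤ) (H Hr : Finset (Finset ℤ)) : Finset (Finset ℤ) :=
  (H ×ˢ Hr).image (fun p => combineEdge N p.1 p.2)

/-!
An edge `{N eᵢ + fᵢ}` of the blow-up determines `(e, f)` through division and remainder by `N`. Two such edges coming from distinct edges `e, e'` of `H` have the pattern of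
`(e, e')`, since `x ↦ N x + (offset in [0, N))` is strictly monotone on `e ∪ e'`. Two edges with the
same `e` and distinct `f, f'` have the pattern of `(f, f')`: by `r`-partiteness, `y < y'` forces the
rank of `y` to be at most that of `y'`, so `y ↦ N e_(rank y) + y` is strictly monotone on `f ∪ f'`.
Hence a `P`-clique of the blow-up projects onto a `P`-clique of `H` whose fibres are `P`-cliques
of `Hr`.
-/

open Finset

theorem List.map_getD_idxOf_eq_zipWith {α β γ : Type*} [DecidableEq α] {l : List α} {l' : List β}
    (hl : l.Nodup) (hlen : l.length = l'.length) (d : β) (g : α → β → γ) :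
    l.map (fun x => g x (l'.getD (l.idxOf x) d)) = List.zipWith g l l' := by
  refine List.ext_getElem (by simp [hlen]) fun n h₁ h₂ => ?_
  have hn : n < l'.length := by simpa [hlen] using h₁
  simp [hl.idxOf_getElem, List.getElem?_eq_getElem hn]

theorem Finset.image_eq_toFinset_map_sort {α β : Type*} [LinearOrder α] [DecidableEq β]
    (s : Finset α) (φ : α → β) :
    s.image φ = (s.sort.map φ).toFinset := by
  ext; simp

theorem Finset.sort_image_of_strictMonoOn {α β : Type*} [LinearOrder α] [LinearOrder β]
    {s : Finset α} {φ : α → β} (hφ : StrictMonoOn φ s) :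
    (s.image φ).sort = s.sort.map φ := by
  have hlt : (s.sort.map φ).Pairwise (· < ·) :=
    List.pairwise_map.2 <| (sortedLT_sort s).pairwise.imp_of_mem fun ha hb hab =>
      hφ ((mem_sort _).1 ha) ((mem_sort _).1 hb) hab
  rw [image_eq_toFinset_map_sort, List.toFinset_sort _ hlt.nodup]
  exact hlt.imp le_of_lt

theorem patternOfPair_image_of_strictMonoOn {s t : Finset ℤ} {φ : ℤ → ℤ}
    (hφ : StrictMonoOn φ ↑(s ∪ t)) :
    patternOfPair (s.image φ) (t.image φ) = patternOfPair s t := by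
  unfold patternOfPair
  rw [← image_union, sort_image_of_strictMonoOn hφ, List.map_map]
  refine List.map_congr_left fun x hx => ?_
  have hs : (s : Set ℤ) ⊆ ↑(s ∪ t) := by simp
  simp only [Function.comp_apply, decide_eq_decide, ← mem_coe, coe_image]
  exact hφ.injOn.mem_image_iff hs ((mem_sort _).1 hx)

theorem strictMonoOn_mul_add {N : ℤ} {c : ℤ → ℤ} {s : Set ℤ} (hc : ∀ x ∈ s, 0 ≤ c x ∧ c x < N) :
    StrictMonoOn (fun x => N * x + c x) s := by
  intro x hx y hy hxy
  obtain ⟨hx₀, hxN⟩ := hc x hx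
  obtain ⟨hy₀, -⟩ := hc y hy
  nlinarith

theorem realizes_iff_of_patternOfPair_eq {P : List Bool} {a b c d : Finset ℤ}
    (h : patternOfPair a b = patternOfPair c d) (h' : patternOfPair b a = patternOfPair d c) :
    Realizes P a b ↔ Realizes P c d := by
  rw [Realizes, Realizes, h, h']

theorem Finset.card_le_mul_of_card_image_fst_le {α β : Type*} [DecidableEq α] [DecidableEq β]
    (T : Finset (α × β)) {m n : ℕ} (hfst : (T.image Prod.fst).card ≤ m)
    (hsnd : ∀ a, ((T.filter (·.1 = a)).image Prod.snd).card ≤ n) : T.card ≤ m * n := by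
  calc T.card ≤ n * (T.image Prod.fst).card := card_le_mul_card_image T n fun a _ => by
        rw [← card_image_of_injOn fun p hp q hq h =>
          Prod.ext ((mem_filter.1 hp).2.trans (mem_filter.1 hq).2.symm) h]
        exact hsnd a
    _ ≤ m * n := by rw [mul_comm]; exact Nat.mul_le_mul_right n hfst

/-- The vertex of `f` of the same rank as `x` has in `e` (junk `0` if that rank is too large). -/
def matchedVertex (e f : Finset ℤ) (x : ℤ) : ℤ := f.sort.getD (e.sort.idxOf x) 0

theorem matchedVertex_mem {e f : Finset ℤ} {x : ℤ} (hc : e.card = f.card) (hx : x ∈ e) :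
    matchedVertex e f x ∈ f := by
  have hlt : e.sort.idxOf x < f.sort.length := by
    simpa [hc] using List.idxOf_lt_length_iff.2 ((mem_sort (· ≤ ·)).2 hx)
  rw [matchedVertex, List.getD_eq_getElem _ _ hlt]
  exact (mem_sort _).1 (List.getElem_mem hlt)

theorem matchedVertex_le_matchedVertex {e g g' : Finset ℤ} {y y' : ℤ}
    (hidx : g.sort.idxOf y ≤ g'.sort.idxOf y') (hc : g'.card = e.card) (hy' : y' ∈ g') :
    matchedVertex g e y ≤ matchedVertex g' e y' := by
  have hj : g'.sort.idxOf y' < e.sort.length := by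
    simpa [hc] using List.idxOf_lt_length_iff.2 ((mem_sort (· ≤ ·)).2 hy')
  rw [matchedVertex, matchedVertex, List.getD_eq_getElem _ _ hj,
    List.getD_eq_getElem _ _ (hidx.trans_lt hj)]
  exact (sortedLT_sort e).sortedLE.getElem_le_getElem_of_le hidx

theorem combineEdge_eq_image_left (N : ℤ) {e f : Finset ℤ} (hc : e.card = f.card) :
    combineEdge N e f = e.image fun x => N * x + matchedVertex e f x := by
  rw [image_eq_toFinset_map_sort, combineEdge,
    ← List.map_getD_idxOf_eq_zipWith (sort_nodup e _) (by simp [hc]) 0]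
  rfl

theorem combineEdge_eq_image_right (N : ℤ) {e f : Finset ℤ} (hc : e.card = f.card) :
    combineEdge N e f = f.image fun y => N * matchedVertex f e y + y := by
  rw [image_eq_toFinset_map_sort, combineEdge, List.zipWith_comm,
    ← List.map_getD_idxOf_eq_zipWith (sort_nodup f _) (by simp [hc]) 0]
  rfl

section Recovery

variable {N : ℤ} {e f : Finset ℤ}

theorem combineEdge_image_ediv (hc : e.card = f.card) (hf : ∀ z ∈ f, 0 ≤ z ∧ z < N) :
    (combineEdge N e f).image (· / N) = e := by
  rw [combineEdge_eq_image_left N hc, image_image]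
  refine (image_congr fun x hx => ?_).trans image_id
  obtain ⟨h₀, hN⟩ := hf _ (matchedVertex_mem hc hx)
  exact ((Int.ediv_emod_unique (by omega)).2 ⟨add_comm _ _, h₀, hN⟩).1

theorem combineEdge_image_emod (hc : e.card = f.card) (hf : ∀ z ∈ f, 0 ≤ z ∧ z < N) :
    (combineEdge N e f).image (· % N) = f := by
  rw [combineEdge_eq_image_right N hc, image_image]
  refine (image_congr fun y hy => ?_).trans image_id
  obtain ⟨h₀, hN⟩ := hf y hy
  exact ((Int.ediv_emod_unique (by omega)).2 ⟨add_comm _ _, h₀, hN⟩).2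

end Recovery

theorem combineEdge_injOn {N : ℤ} {r : ℕ} {H Hr : Finset (Finset ℤ)}
    (hHcard : ∀ e ∈ H, e.card = r) (hHrcard : ∀ f ∈ Hr, f.card = r)
    (hN : ∀ f ∈ Hr, ∀ z ∈ f, 0 ≤ z ∧ z < N) :
    Set.InjOn (fun p : Finset ℤ × Finset ℤ => combineEdge N p.1 p.2) ↑(H ×ˢ Hr) := by
  rintro ⟨e, f⟩ hp ⟨e', f'⟩ hq (h : combineEdge N e f = combineEdge N e' f')
  obtain ⟨he, hf⟩ := mem_product.1 hp
  obtain ⟨he', hf'⟩ := mem_product.1 hq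
  have hc : e.card = f.card := (hHcard e he).trans (hHrcard f hf).symm
  have hc' : e'.card = f'.card := (hHcard e' he').trans (hHrcard f' hf').symm
  have hfst := combineEdge_image_ediv hc (hN f hf)
  have hsnd := combineEdge_image_emod hc (hN f hf)
  rw [h, combineEdge_image_ediv hc' (hN f' hf')] at hfst
  rw [h, combineEdge_image_emod hc' (hN f' hf')] at hsnd
  exact Prod.ext hfst.symm hsnd.symm

theorem patternOfPair_combineEdge_of_disjoint_left {N : ℤ} {e e' f f' : Finset ℤ}
    (hd : Disjoint e e') (hc : e.card = f.card) (hc' : e'.card = f'.card)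
    (hf : ∀ z ∈ f, 0 ≤ z ∧ z < N) (hf' : ∀ z ∈ f', 0 ≤ z ∧ z < N) :
    patternOfPair (combineEdge N e f) (combineEdge N e' f') = patternOfPair e e' := by
  classical
  set c := e.piecewise (matchedVertex e f) (matchedVertex e' f')
  have hce : combineEdge N e f = e.image fun x => N * x + c x := by
    rw [combineEdge_eq_image_left N hc]
    exact image_congr fun x hx => by simp [c, piecewise_eq_of_mem _ _ _ (mem_coe.1 hx)]
  have hce' : combineEdge N e' f' = e'.image fun x => N * x + c x := by
    rw [combineEdge_eq_image_left N hc']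
    exact image_congr fun x hx => by
      simp [c, piecewise_eq_of_notMem _ _ _ (disjoint_right.1 hd (mem_coe.1 hx))]
  rw [hce, hce']
  refine patternOfPair_image_of_strictMonoOn (strictMonoOn_mul_add fun x hx => ?_)
  rcases mem_union.1 hx with hx | hx
  · have hcx : c x = matchedVertex e f x := piecewise_eq_of_mem _ _ _ hx
    exact hcx ▸ hf _ (matchedVertex_mem hc hx)
  · have hcx : c x = matchedVertex e' f' x := piecewise_eq_of_notMem _ _ _ (disjoint_right.1 hd hx)
    exact hcx ▸ hf' _ (matchedVertex_mem hc' hx)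

theorem RPartite.idxOf_le_idxOf_of_lt {H : Finset (Finset ℤ)} (hH : RPartite H) {g g' : Finset ℤ}
    (hg : g ∈ H) (hg' : g' ∈ H) {y y' : ℤ} (hy : y ∈ g) (hy' : y' ∈ g') (hlt : y < y') :
    g.sort.idxOf y ≤ g'.sort.idxOf y' := by
  by_contra! hji
  have hi := List.idxOf_lt_length_iff.2 ((mem_sort (· ≤ ·)).2 hy)
  have hj := List.idxOf_lt_length_iff.2 ((mem_sort (· ≤ ·)).2 hy')
  have hstep := hH g' hg' g hg _ hj (by omega)
  have hmono : g.sort[g'.sort.idxOf y' + 1] ≤ g.sort[g.sort.idxOf y] :=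
    (sortedLT_sort g).sortedLE.getElem_le_getElem_of_le hji
  simp only [List.get_eq_getElem, List.getElem_idxOf] at hstep hmono
  exact absurd (hstep.trans_le hmono) hlt.not_gt

theorem patternOfPair_combineEdge_of_disjoint_right {N : ℤ} {H : Finset (Finset ℤ)}
    (hH : RPartite H) {e f f' : Finset ℤ} (hfH : f ∈ H) (hf'H : f' ∈ H) (hd : Disjoint f f')
    (hc : e.card = f.card) (hc' : e.card = f'.card)
    (hf : ∀ z ∈ f, 0 ≤ z ∧ z < N) (hf' : ∀ z ∈ f', 0 ≤ z ∧ z < N) :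
    patternOfPair (combineEdge N e f) (combineEdge N e f') = patternOfPair f f' := by
  classical
  set c := f.piecewise (matchedVertex f e) (matchedVertex f' e)
  have hcf : combineEdge N e f = f.image fun y => N * c y + y := by
    rw [combineEdge_eq_image_right N hc]
    exact image_congr fun y hy => by simp [c, piecewise_eq_of_mem _ _ _ (mem_coe.1 hy)]
  have hcf' : combineEdge N e f' = f'.image fun y => N * c y + y := by
    rw [combineEdge_eq_image_right N hc']
    exact image_congr fun y hy => by
      simp [c, piecewise_eq_of_notMem _ _ _ (disjoint_right.1 hd (mem_coe.1 hy))]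
  have hsource : ∀ y ∈ f ∪ f', ∃ g ∈ H, y ∈ g ∧ e.card = g.card ∧ c y = matchedVertex g e y ∧
      0 ≤ y ∧ y < N := by
    intro y hy
    rcases mem_union.1 hy with hy | hy
    · exact ⟨f, hfH, hy, hc, piecewise_eq_of_mem _ _ _ hy, hf y hy⟩
    · exact ⟨f', hf'H, hy, hc', piecewise_eq_of_notMem _ _ _ (disjoint_right.1 hd hy), hf' y hy⟩
  rw [hcf, hcf']
  refine patternOfPair_image_of_strictMonoOn fun y hy y' hy' hlt => ?_
  obtain ⟨g, hg, hyg, -, hcy, hy₀, hyN⟩ := hsource y hy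
  obtain ⟨g', hg', hyg', hcg', hcy', -⟩ := hsource y' hy'
  have hle : c y ≤ c y' := hcy ▸ hcy' ▸ matchedVertex_le_matchedVertex
    (hH.idxOf_le_idxOf_of_lt hg hg' hyg hyg' hlt) hcg'.symm hyg'
  have hN : 0 ≤ N := by omega
  nlinarith

section Cliques

variable {P : List Bool} {N : ℤ} {r : ℕ} {H Hr : Finset (Finset ℤ)}
  {T : Finset (Finset ℤ × Finset ℤ)}

theorem isPClique_image_fst (hHcard : ∀ e ∈ H, e.card = r)
    (hHdisj : ∀ e ∈ H, ∀ f ∈ H, e ≠ f → Disjoint e f) (hHrcard : ∀ f ∈ Hr, f.card = r)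
    (hN : ∀ f ∈ Hr, ∀ z ∈ f, 0 ≤ z ∧ z < N) (hT : T ⊆ H ×ˢ Hr)
    (hTP : ∀ p ∈ T, ∀ q ∈ T, p ≠ q → Realizes P (combineEdge N p.1 p.2) (combineEdge N q.1 q.2)) :
    IsPClique P (T.image Prod.fst) := by
  simp only [IsPClique, mem_image]
  rintro _ ⟨⟨e, f⟩, hp, rfl⟩ _ ⟨⟨e', f'⟩, hq, rfl⟩ hne
  obtain ⟨he, hf⟩ := mem_product.1 (hT hp)
  obtain ⟨he', hf'⟩ := mem_product.1 (hT hq)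
  have hd := hHdisj e he e' he' hne
  have hc : e.card = f.card := (hHcard e he).trans (hHrcard f hf).symm
  have hc' : e'.card = f'.card := (hHcard e' he').trans (hHrcard f' hf').symm
  refine (realizes_iff_of_patternOfPair_eq
    (patternOfPair_combineEdge_of_disjoint_left hd hc hc' (hN f hf) (hN f' hf'))
    (patternOfPair_combineEdge_of_disjoint_left hd.symm hc' hc (hN f' hf') (hN f hf))).1
    (hTP _ hp _ hq fun h => hne (Prod.ext_iff.1 h).1)

theorem isPClique_image_snd_filter_fst_eq (hHcard : ∀ e ∈ H, e.card = r)
    (hHrcard : ∀ f ∈ Hr, f.card = r) (hHrdisj : ∀ e ∈ Hr, ∀ f ∈ Hr, e ≠ f → Disjoint e f)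
    (hrp : RPartite Hr) (hN : ∀ f ∈ Hr, ∀ z ∈ f, 0 ≤ z ∧ z < N) (hT : T ⊆ H ×ˢ Hr)
    (hTP : ∀ p ∈ T, ∀ q ∈ T, p ≠ q → Realizes P (combineEdge N p.1 p.2) (combineEdge N q.1 q.2))
    (e : Finset ℤ) :
    IsPClique P ((T.filter (·.1 = e)).image Prod.snd) := by
  simp only [IsPClique, mem_image, mem_filter]
  rintro _ ⟨⟨e₁, f⟩, ⟨hp, he₁⟩, rfl⟩ _ ⟨⟨e₂, f'⟩, ⟨hq, he₂⟩, rfl⟩ hne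
  rw [show e₁ = e from he₁] at hp
  rw [show e₂ = e from he₂] at hq
  obtain ⟨he, hf⟩ := mem_product.1 (hT hp)
  have hf' := (mem_product.1 (hT hq)).2
  have hd := hHrdisj f hf f' hf' hne
  have hc : e.card = f.card := (hHcard e he).trans (hHrcard f hf).symm
  have hc' : e.card = f'.card := (hHcard e he).trans (hHrcard f' hf').symm
  refine (realizes_iff_of_patternOfPair_eq
    (patternOfPair_combineEdge_of_disjoint_right hrp hf hf' hd hc hc' (hN f hf) (hN f' hf'))
    (patternOfPair_combineEdge_of_disjoint_right hrp hf' hf hd.symm hc' hc (hN f' hf') (hN f hf))).1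
    (hTP _ hp _ hq fun h => hne (Prod.ext_iff.1 h).2)

end Cliques

theorem blowup_clique_bound_general (r : ℕ) (N : ℤ)
    (H Hr : Finset (Finset ℤ))
    (hHcard : ∀ e ∈ H, e.card = r)
    (hHdisj : ∀ e ∈ H, ∀ f ∈ H, e ≠ f → Disjoint e f)
    (hHrcard : ∀ e ∈ Hr, e.card = r)
    (hHrdisj : ∀ e ∈ Hr, ∀ f ∈ Hr, e ≠ f → Disjoint e f)
    (hrp : RPartite Hr)
    (hN : ∀ f ∈ Hr, ∀ z ∈ f, 0 ≤ z ∧ z < N)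
    (P : List Bool) (mH mHr : ℕ)
    (hLH : ∀ S ⊆ H, IsPClique P S → S.card ≤ mH)
    (hLHr : ∀ S ⊆ Hr, IsPClique P S → S.card ≤ mHr) :
    ∀ S ⊆ blowup N H Hr, IsPClique P S → S.card ≤ mH * mHr := by
  classical
  intro S hS hSP
  set T := (H ×ˢ Hr).filter fun p => combineEdge N p.1 p.2 ∈ S
  have hT : T ⊆ H ×ˢ Hr := filter_subset _ _
  have hinj : Set.InjOn (fun p : Finset ℤ × Finset ℤ => combineEdge N p.1 p.2) T :=
    (combineEdge_injOn hHcard hHrcard hN).mono (coe_subset.2 hT)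
  have hTS : T.image (fun p => combineEdge N p.1 p.2) = S := by
    refine (image_subset_iff.2 fun p hp => (mem_filter.1 hp).2).antisymm fun c hc => ?_
    obtain ⟨p, hp, rfl⟩ := mem_image.1 (hS hc)
    exact mem_image_of_mem _ (mem_filter.2 ⟨hp, hc⟩)
  have hTP : ∀ p ∈ T, ∀ q ∈ T, p ≠ q →
      Realizes P (combineEdge N p.1 p.2) (combineEdge N q.1 q.2) := fun p hp q hq hpq =>
    hSP _ (mem_filter.1 hp).2 _ (mem_filter.1 hq).2 (hinj.ne hp hq hpq)
  rw [← hTS, card_image_of_injOn hinj]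
  exact T.card_le_mul_of_card_image_fst_le
    (hLH _ (image_subset_iff.2 fun p hp => (mem_product.1 (hT hp)).1)
      (isPClique_image_fst hHcard hHdisj hHrcard hN hT hTP))
    fun e => hLHr _ (image_subset_iff.2 fun p hp => (mem_product.1 (hT (mem_filter.1 hp).1)).2)
      (isPClique_image_snd_filter_fst_eq hHcard hHrcard hHrdisj hrp hN hT hTP e)

/-- For ordered `r`-uniform matchings `H` and `Hr` with `Hr` being `r`-partite (and with the
vertices of `Hr` lying in `{0, …, N-1}`), the largest `P`-clique in the blow-up `H[Hr]` has
size at most `L_P(H) · L_P(Hr)` for every `r`-pattern `P`. -/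
theorem blowup_clique_bound (r : ℕ) (hr : 1 ≤ r) (N : ℤ)
    (H Hr : Finset (Finset ℤ))
    (hHcard : ∀ e ∈ H, e.card = r)
    (hHdisj : ∀ e ∈ H, ∀ f ∈ H, e ≠ f → Disjoint e f)
    (hHrcard : ∀ e ∈ Hr, e.card = r)
    (hHrdisj : ∀ e ∈ Hr, ∀ f ∈ Hr, e ≠ f → Disjoint e f)
    (hrp : RPartite Hr)
    (hN : ∀ f ∈ Hr, ∀ z ∈ f, 0 ≤ z ∧ z < N)
    (P : List Bool) (hP : IsPattern r P) (mH mHr : ℕ)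
    (hLH : ∀ S ⊆ H, IsPClique P S → S.card ≤ mH)
    (hLHr : ∀ S ⊆ Hr, IsPClique P S → S.card ≤ mHr) :
    ∀ S ⊆ blowup N H Hr, IsPClique P S → S.card ≤ mH * mHr :=
  blowup_clique_bound_general r N H Hr hHcard hHdisj hHrcard hHrdisj hrp hN P mH mHr hLH hLHr
end

section
/- Let r ≥ 1 and for each of the 2^{r−1} collectable r-patterns P with all block sizes equal to 2 (i.e., P ∈ 𝒫((1,1,…,1))), let m_P be a positive integer. Then there exists an r-partite ordered r-uniform hypergraph matching H of size ∏_{P ∈ 𝒫((1,…,1))} m_P such that for every P ∈ 𝒫((1,…,1)) every P-clique in H has size at most m_P, and for every other r-pattern P every P-clique has size 1. -/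
/-! Write each pattern `P ∈ 𝒫((1,…,1))` as a sign vector `σ_P` (block `i` is `AB` iff
`σ_P i`) and take as vertex set of the matching the box `X = ∏_P [m_P]`. The `i`-th vertex of the
edge of `x ∈ X` lies in the `i`-th of `r` consecutive intervals of length `|X|`, at the
lexicographic rank of `x` after reversing the coordinates `P` with `σ_P i = false`. For `x ≠ y`
with first differing coordinate `P`, the `i`-th vertices of their edges compare as `x P` and
`y P` do, up to the flip `σ_P i`; so the pair realizes exactly `P`. Hence the members of a
`P`-clique have pairwise distinct `P`-coordinates, and no pattern outside `𝒫((1,…,1))` is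
realized at all. -/

open Finset

section SignPattern

variable {r : ℕ}

def signPattern (σ : Fin r → Bool) : List Bool :=
  (List.ofFn fun i => [σ i, !σ i]).flatten

lemma signPattern_not (σ : Fin r → Bool) :
    signPattern (fun i => !σ i) = (signPattern σ).map not := by
  simp [signPattern, List.map_flatten, List.map_ofFn, Function.comp_def]

lemma head?_signPattern [NeZero r] (σ : Fin r → Bool) :
    (signPattern σ).head? = some (σ 0) := by
  obtain ⟨k, rfl⟩ := Nat.exists_eq_succ_of_ne_zero (NeZero.ne r)
  simp [signPattern, List.ofFn_succ]

lemma patternOfParts_replicate_one (τ : Fin (List.replicate r 1).length → Bool) :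
    patternOfParts (List.replicate r 1) τ =
      signPattern (τ ∘ Fin.cast List.length_replicate.symm) := by
  rw [patternOfParts, signPattern, List.ofFn_congr List.length_replicate]
  congr! with i
  simp only [List.get_eq_getElem, List.getElem_replicate, Function.comp_apply]
  cases τ _ <;> rfl

lemma mem_patternFinset_replicate_one_iff [NeZero r] {P : List Bool} :
    P ∈ patternFinset (List.replicate r 1) ↔
      ∃ σ : Fin r → Bool, σ 0 = true ∧ signPattern σ = P := by
  simp only [patternFinset, mem_image, mem_filter, mem_univ, true_and, patternOfParts_replicate_one]
  constructor
  · rintro ⟨τ, hτ, rfl⟩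
    exact ⟨_, hτ (by simp [Nat.pos_of_neZero]), rfl⟩
  · rintro ⟨σ, hσ, rfl⟩
    exact ⟨σ ∘ Fin.cast List.length_replicate, fun _ => hσ, rfl⟩

end SignPattern

section InterleavedEdges

variable {r : ℕ}

lemma sort_image_of_strictMono {f : Fin r → ℤ} (hf : StrictMono f) :
    (univ.image f).sort (· ≤ ·) = List.ofFn f :=
  (sortedLT_sort _).eq_of_mem_iff (List.sortedLT_ofFn_iff.2 hf) (by simp)

variable {a b : Fin r → ℤ}

lemma disjoint_image_of_interleaved (hab : ∀ i j, i < j → max (a i) (b i) < min (a j) (b j))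
    (hne : ∀ i, a i ≠ b i) : Disjoint (univ.image a) (univ.image b) := by
  simp only [disjoint_left, mem_image, mem_univ, true_and, not_exists]
  rintro _ ⟨i, rfl⟩ k hk
  rcases lt_trichotomy k i with hki | rfl | hik
  · have := hab k i hki
    grind
  · exact hne k hk.symm
  · have := hab i k hik
    grind

lemma patternOfPair_image_of_interleaved
    (hab : ∀ i j, i < j → max (a i) (b i) < min (a j) (b j)) (hne : ∀ i, a i ≠ b i) :
    patternOfPair (univ.image a) (univ.image b) = signPattern fun i => decide (a i < b i) := by
  set block : Fin r → List ℤ := fun i => if a i < b i then [a i, b i] else [b i, a i]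
  have mem_block : ∀ i x, x ∈ block i ↔ x = a i ∨ x = b i := by
    intro i x
    simp only [block]
    split_ifs <;> simp [or_comm]
  have hsort : (univ.image a ∪ univ.image b).sort (· ≤ ·) = (List.ofFn block).flatten := by
    refine (sortedLT_sort _).eq_of_mem_iff ?_ fun x => ?_
    · refine List.Pairwise.sortedLT <| List.pairwise_flatten.2
        ⟨?_, List.pairwise_ofFn.2 fun i j hij x hx y hy => ?_⟩
      · simp only [List.mem_ofFn, forall_exists_index, forall_apply_eq_imp_iff]
        intro i
        simp only [block]
        split_ifs with h
        · simpa using h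
        · simpa using lt_of_le_of_ne (not_lt.1 h) (hne i).symm
      · have := hab i j hij
        rw [mem_block] at hx hy
        grind
    · simp only [mem_sort, mem_union, mem_image, mem_univ, true_and, List.mem_flatten,
        List.mem_ofFn, exists_exists_eq_and, mem_block]
      grind
  have hb : ∀ i k, a k ≠ b i := fun i k h =>
    disjoint_left.1 (disjoint_image_of_interleaved hab hne) (mem_image_of_mem a (mem_univ k))
      (h ▸ mem_image_of_mem b (mem_univ i))
  rw [patternOfPair, hsort, List.map_flatten, List.map_ofFn, signPattern]
  congr 1
  refine List.ofFn_inj.2 (funext fun i => ?_)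
  simp only [Function.comp_apply, block]
  split_ifs with h <;> simp [h, hb i]

lemma rPartite_image_of_layered {κ : Type*} (s : Finset κ) (v : κ → Fin r → ℤ)
    (hv : ∀ x y i j, i < j → v x i < v y j) : RPartite (s.image fun x => univ.image (v x)) := by
  simp only [RPartite, forall_mem_image]
  intro x _ y _ i hi hi'
  have hsort : ∀ z, (univ.image (v z)).sort (· ≤ ·) = List.ofFn (v z) := fun z =>
    sort_image_of_strictMono fun _ _ h => hv z z _ _ h
  rw [List.get_of_eq (hsort x), List.get_of_eq (hsort y), List.get_ofFn, List.get_ofFn]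
  exact hv _ _ _ _ (Fin.mk_lt_mk.2 (Nat.lt_succ_self i))

end InterleavedEdges

lemma Pi.toLex_lt_toLex_iff_of_eq_of_ne {ι : Type*} [LinearOrder ι] {β : ι → Type*}
    [∀ j, LinearOrder (β j)] {u w : ∀ j, β j} {j : ι} (hagree : ∀ k < j, u k = w k)
    (hne : u j ≠ w j) : toLex u < toLex w ↔ u j < w j :=
  ⟨fun h => (Pi.apply_le_of_toLex h.le hagree).lt_of_ne hne, fun h => ⟨j, hagree, h⟩⟩

noncomputable section LexMatching

variable {ι : Type*} {r : ℕ} (m : ι → ℕ) (σ : ι → Fin r → Bool)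

def flipCoords (i : Fin r) (x : ∀ j, Fin (m j)) : ∀ j, Fin (m j) :=
  fun j => if σ j i then x j else (x j).rev

lemma flipCoords_injective (i : Fin r) : Function.Injective (flipCoords m σ i) := by
  intro x y h
  funext j
  have := congrFun h j
  simp only [flipCoords] at this
  split_ifs at this <;> simpa using this

variable [LinearOrder ι] [Fintype ι]

def lexRank : Lex (∀ j, Fin (m j)) ≃o Fin (Fintype.card (∀ j, Fin (m j))) :=
  (Fintype.orderIsoFinOfCardEq _ rfl).symm

def lexVertex (x : ∀ j, Fin (m j)) (i : Fin r) : ℤ :=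
  i * Fintype.card (∀ j, Fin (m j)) + lexRank m (toLex (flipCoords m σ i x))

def lexEdge (x : ∀ j, Fin (m j)) : Finset ℤ :=
  univ.image (lexVertex m σ x)

def lexMatching : Finset (Finset ℤ) :=
  univ.image (lexEdge m σ)

variable {m σ}

lemma lexVertex_lt_of_lt {i i' : Fin r} (h : i < i') (x y : ∀ j, Fin (m j)) :
    lexVertex m σ x i < lexVertex m σ y i' := by
  have hx := (lexRank m (toLex (flipCoords m σ i x))).isLt
  have hi : (i : ℤ) + 1 ≤ i' := by exact_mod_cast h
  unfold lexVertex
  nlinarith [Int.natCast_nonneg (lexRank m (toLex (flipCoords m σ i' y)) : ℕ)]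

lemma lexVertex_left_injective (i : Fin r) : Function.Injective (lexVertex m σ · i) := by
  intro x y h
  simp only [lexVertex, add_right_inj, Nat.cast_inj, Fin.val_inj,
    EmbeddingLike.apply_eq_iff_eq] at h
  exact flipCoords_injective m σ i (toLex.injective h)

lemma lexVertex_lt_lexVertex_iff {x y : ∀ j, Fin (m j)} {j : ι} (hagree : ∀ k < j, x k = y k)
    (hlt : x j < y j) (i : Fin r) : lexVertex m σ x i < lexVertex m σ y i ↔ σ j i = true := by
  have hrank : lexVertex m σ x i < lexVertex m σ y i ↔
      toLex (flipCoords m σ i x) < toLex (flipCoords m σ i y) := by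
    simp only [lexVertex, add_lt_add_iff_left, Nat.cast_lt, ← Fin.lt_def]
    exact (lexRank m).lt_iff_lt
  rw [hrank, Pi.toLex_lt_toLex_iff_of_eq_of_ne (j := j)
    (fun k hk => by simp [flipCoords, hagree k hk])]
  all_goals simp only [flipCoords]; cases σ j i <;> simp [hlt, hlt.le, hlt.ne]

lemma lexVertex_interleaved (x y : ∀ j, Fin (m j)) (i i' : Fin r) (h : i < i') :
    max (lexVertex m σ x i) (lexVertex m σ y i) <
      min (lexVertex m σ x i') (lexVertex m σ y i') :=
  max_lt (lt_min (lexVertex_lt_of_lt h x x) (lexVertex_lt_of_lt h x y))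
    (lt_min (lexVertex_lt_of_lt h y x) (lexVertex_lt_of_lt h y y))

lemma disjoint_lexEdge {x y : ∀ j, Fin (m j)} (hxy : x ≠ y) :
    Disjoint (lexEdge m σ x) (lexEdge m σ y) :=
  disjoint_image_of_interleaved (lexVertex_interleaved x y)
    fun i => (lexVertex_left_injective i).ne hxy

lemma lexEdge_injective [NeZero r] : Function.Injective (lexEdge m σ) := by
  intro x y h
  by_contra hxy
  have := disjoint_lexEdge (σ := σ) hxy
  rw [h, disjoint_self_iff_empty] at this
  exact (univ_nonempty.image _).ne_empty this

lemma card_of_mem_lexMatching {e : Finset ℤ} (he : e ∈ lexMatching m σ) : e.card = r := by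
  obtain ⟨x, -, rfl⟩ := mem_image.1 he
  rw [lexEdge, card_image_of_injective _
    (StrictMono.injective fun _ _ h => lexVertex_lt_of_lt h x x), card_univ, Fintype.card_fin]

lemma disjoint_of_mem_lexMatching {e f : Finset ℤ} (he : e ∈ lexMatching m σ)
    (hf : f ∈ lexMatching m σ) (hef : e ≠ f) : Disjoint e f := by
  obtain ⟨x, -, rfl⟩ := mem_image.1 he
  obtain ⟨y, -, rfl⟩ := mem_image.1 hf
  exact disjoint_lexEdge (ne_of_apply_ne _ hef)

lemma card_lexMatching [NeZero r] : (lexMatching m σ).card = ∏ j, m j := by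
  rw [lexMatching, card_image_of_injective _ lexEdge_injective, card_univ, Fintype.card_pi]
  simp

lemma rPartite_lexMatching : RPartite (lexMatching m σ) :=
  rPartite_image_of_layered _ _ fun x y _ _ h => lexVertex_lt_of_lt h x y

lemma patternOfPair_lexEdge {x y : ∀ j, Fin (m j)} (hxy : x ≠ y) :
    patternOfPair (lexEdge m σ x) (lexEdge m σ y) =
      signPattern fun i => decide (lexVertex m σ x i < lexVertex m σ y i) :=
  patternOfPair_image_of_interleaved (lexVertex_interleaved x y)
    fun i => (lexVertex_left_injective i).ne hxy

lemma exists_eq_signPattern_of_realizes [NeZero r] (hσ : ∀ j, σ j 0 = true) {P : List Bool}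
    (hP : P.head? = some true) {x y : ∀ j, Fin (m j)} (hxy : x ≠ y)
    (h : Realizes P (lexEdge m σ x) (lexEdge m σ y)) :
    ∃ j, x j ≠ y j ∧ P = signPattern (σ j) := by
  wlog hlt : toLex x < toLex y generalizing x y
  · obtain ⟨j, hj, hPj⟩ := this hxy.symm h.symm
      ((lt_or_gt_of_ne (toLex.injective.ne hxy)).resolve_left hlt)
    exact ⟨j, hj.symm, hPj⟩
  obtain ⟨j, hagree, hj⟩ : ∃ j, (∀ k < j, x k = y k) ∧ x j < y j := hlt
  have hxy_sign : (fun i => decide (lexVertex m σ x i < lexVertex m σ y i)) = σ j :=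
    funext fun i => by simp [lexVertex_lt_lexVertex_iff hagree hj]
  have hyx_sign : (fun i => decide (lexVertex m σ y i < lexVertex m σ x i)) = fun i => !σ j i :=
    funext fun i => by
      have hne := (lexVertex_left_injective (σ := σ) i).ne hxy
      rw [← congrFun hxy_sign i]
      by_cases hlt : lexVertex m σ x i < lexVertex m σ y i <;> simp [hlt] <;> omega
  refine ⟨j, hj.ne, ?_⟩
  rcases h with h | h
  · rw [← h, patternOfPair_lexEdge hxy, hxy_sign]
  · rw [patternOfPair_lexEdge hxy.symm, hyx_sign, signPattern_not] at h
    rw [← h, List.head?_map, head?_signPattern, hσ] at hP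
    simp at hP

lemma card_le_of_isPClique [NeZero r] (hσ : ∀ j, σ j 0 = true)
    (hσinj : Function.Injective fun j => signPattern (σ j)) {S : Finset (Finset ℤ)}
    (hS : S ⊆ lexMatching m σ) {j₀ : ι} (hclique : IsPClique (signPattern (σ j₀)) S) :
    S.card ≤ m j₀ := by
  obtain ⟨T, -, rfl⟩ := subset_image_iff.1 hS
  have hinj : Set.InjOn (fun x : ∀ j, Fin (m j) => x j₀) T := by
    intro x hx y hy hxy₀
    by_contra hxy
    obtain ⟨j, hj, hPj⟩ := exists_eq_signPattern_of_realizes hσ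
      (by rw [head?_signPattern, hσ]) hxy (hclique _ (mem_image_of_mem _ hx) _
        (mem_image_of_mem _ hy) (lexEdge_injective.ne hxy))
    exact hj (hσinj hPj ▸ hxy₀)
  calc (T.image (lexEdge m σ)).card ≤ T.card := card_image_le
    _ ≤ (univ : Finset (Fin (m j₀))).card :=
      card_le_card_of_injOn _ (fun _ _ => mem_coe.2 (mem_univ _)) hinj
    _ = m j₀ := by simp

lemma card_le_one_of_isPClique [NeZero r] (hσ : ∀ j, σ j 0 = true) {P : List Bool}
    (hP : P.head? = some true) (hPσ : ∀ j, P ≠ signPattern (σ j)) {S : Finset (Finset ℤ)}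
    (hS : S ⊆ lexMatching m σ) (hclique : IsPClique P S) : S.card ≤ 1 := by
  refine card_le_one.2 fun e he f hf => ?_
  by_contra hef
  obtain ⟨x, -, rfl⟩ := mem_image.1 (hS he)
  obtain ⟨y, -, rfl⟩ := mem_image.1 (hS hf)
  obtain ⟨j, -, hj⟩ := exists_eq_signPattern_of_realizes hσ hP (ne_of_apply_ne _ hef)
    (hclique _ he _ hf hef)
  exact hPσ j hj

end LexMatching

theorem r_partite_construction_general (r : ℕ) (hr : 1 ≤ r)
    (m : List Bool → ℕ) :
    ∃ H : Finset (Finset ℤ),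
      (∀ e ∈ H, e.card = r) ∧
      (∀ e ∈ H, ∀ f ∈ H, e ≠ f → Disjoint e f) ∧
      RPartite H ∧
      H.card = (∏ P ∈ patternFinset (List.replicate r 1), m P) ∧
      (∀ P ∈ patternFinset (List.replicate r 1), ∀ S ⊆ H, IsPClique P S → S.card ≤ m P) ∧
      (∀ P : List Bool, IsPattern r P → P ∉ patternFinset (List.replicate r 1) →
        ∀ S ⊆ H, IsPClique P S → S.card ≤ 1) := by
  have : NeZero r := ⟨by omega⟩
  choose σ hσ0 hσ using fun P : patternFinset (List.replicate r 1) =>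
    mem_patternFinset_replicate_one_iff.1 P.2
  have hσinj : Function.Injective fun P => signPattern (σ P) := fun P Q h =>
    Subtype.ext ((hσ P).symm.trans (h.trans (hσ Q)))
  refine ⟨lexMatching (fun P : patternFinset (List.replicate r 1) => m P) σ,
    fun e he => card_of_mem_lexMatching he, fun e he f hf => disjoint_of_mem_lexMatching he hf,
    rPartite_lexMatching, ?_, ?_, ?_⟩
  · rw [card_lexMatching, prod_coe_sort]
  · intro P hP S hS hclique
    exact card_le_of_isPClique (j₀ := ⟨P, hP⟩) hσ0 hσinj hS (by rwa [hσ])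
  · intro P hP hPs S hS
    exact card_le_one_of_isPClique hσ0 hP.2.2 (fun j h => hPs (h ▸ hσ j ▸ j.2)) hS

/-- **Construction of an `r`-partite matching.** For positive integers `m P` for the `2^(r-1)`
collectable `r`-patterns `P ∈ 𝒫((1,…,1))`, there is an `r`-partite ordered matching of size
`∏_{P ∈ 𝒫((1,…,1))} m P` in which every `P`-clique has size at most `m P` for
`P ∈ 𝒫((1,…,1))`, and size at most `1` for every other `r`-pattern. -/
theorem r_partite_construction (r : ℕ) (hr : 1 ≤ r)
    (m : List Bool → ℕ) (hm : ∀ P ∈ patternFinset (List.replicate r 1), 0 < m P) :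
    ∃ H : Finset (Finset ℤ),
      (∀ e ∈ H, e.card = r) ∧
      (∀ e ∈ H, ∀ f ∈ H, e ≠ f → Disjoint e f) ∧
      RPartite H ∧
      H.card = (∏ P ∈ patternFinset (List.replicate r 1), m P) ∧
      (∀ P ∈ patternFinset (List.replicate r 1), ∀ S ⊆ H, IsPClique P S → S.card ≤ m P) ∧
      (∀ P : List Bool, IsPattern r P → P ∉ patternFinset (List.replicate r 1) →
        ∀ S ⊆ H, IsPClique P S → S.card ≤ 1) :=
  r_partite_construction_general r hr m
end
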